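/- arXiv:2204.02556 — 4 statements merged into one kernel-verified Lean document; each statement's English description precedes it below -/
import Mathlib

section
/- There exists an involution σ on the set of partitions of [n] (n ≥ 1) such that for every partition P, X(σ(P)) = Y(P) and Y(σ(P)) = X(P). Consequently, the joint distribution of (X, Y) on partitions of [n] is symmetric, and in particular X and Y are equidistributed on partitions of [n]. -/
/-- Maximum entry of a block. -/
def blockMax (B : Finset ℕ) : ℕ := B.sup id

/-- Minimum entry of a block (0 if empty). -/
def blockMin (B : Finset ℕ) : ℕ := B.min.getD 0

/-- The span of a block: the smallest interval of integers containing it. -/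
def blockSpan (B : Finset ℕ) : Finset ℕ := Finset.Icc (blockMin B) (blockMax B)

/-- Second smallest entry of a block (0 if it does not exist). -/
def secondMin (B : Finset ℕ) : ℕ := (B.erase (blockMin B)).min.getD 0

/-- The minimax statistic: minimum over blocks of the maximum entry. -/
def X (n : ℕ) (P : Finpartition (Finset.Icc 1 n)) : ℕ :=
  ((P.parts.image blockMax).min).getD 0

/-- The block containing 1. -/
def block1 (n : ℕ) (P : Finpartition (Finset.Icc 1 n)) : Finset ℕ :=
  P.parts.sup (fun B => if 1 ∈ B then B else ∅)

/-- The statistic Y: 1 if {1} is a singleton block, else min of r (minimum over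
non-singleton blocks of their maxima) and s (second smallest entry of the block of 1). -/
def Y (n : ℕ) (P : Finpartition (Finset.Icc 1 n)) : ℕ :=
  if ({1} : Finset ℕ) ∈ P.parts then 1
  else min ((((P.parts.filter (fun B => 2 ≤ B.card)).image blockMax).min).getD 0)
           (secondMin (block1 n P))

/-- A partition is nonoverlapping if the spans of any two blocks are disjoint or nested. -/
def Nonoverlapping (n : ℕ) (P : Finpartition (Finset.Icc 1 n)) : Prop :=
  ∀ B1 ∈ P.parts, ∀ B2 ∈ P.parts,
    Disjoint (blockSpan B1) (blockSpan B2) ∨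
      blockSpan B1 ⊆ blockSpan B2 ∨ blockSpan B2 ⊆ blockSpan B1

namespace Stmt3

/-- r statistic -/
def rstat (n : ℕ) (P : Finpartition (Finset.Icc 1 n)) : ℕ :=
  (((P.parts.filter (fun B => 2 ≤ B.card)).image blockMax).min).getD 0

/-- small singleton values -/
def ASet (n : ℕ) (P : Finpartition (Finset.Icc 1 n)) : Finset ℕ :=
  (Finset.Icc 1 n).filter (fun x => ({x} : Finset ℕ) ∈ P.parts ∧ x < rstat n P)

/-- small non-1 elements of the block of 1 -/
def CSet (n : ℕ) (P : Finpartition (Finset.Icc 1 n)) : Finset ℕ :=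
  (block1 n P).filter (fun x => x ≠ 1 ∧ x < rstat n P)

def newBig (n : ℕ) (P : Finpartition (Finset.Icc 1 n)) : Finset ℕ :=
  (block1 n P \ CSet n P) ∪ ASet n P

def newParts (n : ℕ) (P : Finpartition (Finset.Icc 1 n)) : Finset (Finset ℕ) :=
  ((P.parts.erase (block1 n P)) \ (ASet n P).image (fun x => {x})) ∪
    insert (newBig n P) ((CSet n P).image (fun x => {x}))

section Basic

variable {n : ℕ} {P : Finpartition (Finset.Icc 1 n)}

lemma le_blockMax {B : Finset ℕ} {a : ℕ} (h : a ∈ B) : a ≤ blockMax B :=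
  Finset.le_sup (f := id) h

lemma blockMax_mem {B : Finset ℕ} (h : B.Nonempty) : blockMax B ∈ B := by
  obtain ⟨a, ha, h2⟩ := Finset.exists_mem_eq_sup B h id
  rw [blockMax, h2]; exact ha

lemma blockMax_singleton (a : ℕ) : blockMax {a} = a := by
  simp [blockMax]

lemma parts_subset {B : Finset ℕ} (hB : B ∈ P.parts) : B ⊆ Finset.Icc 1 n :=
  P.le hB

lemma one_le_of_mem {B : Finset ℕ} (hB : B ∈ P.parts) {a : ℕ} (ha : a ∈ B) : 1 ≤ a :=
  (Finset.mem_Icc.1 (parts_subset hB ha)).1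

lemma hn_one_mem (hn : 1 ≤ n) : 1 ∈ Finset.Icc 1 n := by
  simp [Finset.mem_Icc, hn]

lemma min_getD {s : Finset ℕ} (h : s.Nonempty) : (s.min).getD 0 = s.min' h := by
  rw [← Finset.coe_min' h]; rfl

lemma block1_eq_part (hn : 1 ≤ n) : block1 n P = P.part 1 := by
  apply le_antisymm
  · apply Finset.sup_le
    intro B hB
    split_ifs with h
    · rw [P.part_eq_of_mem hB h]
    · exact Finset.empty_subset _
  · have h1 := Finset.le_sup (f := fun B => if 1 ∈ B then B else ∅)
      (P.part_mem.2 (hn_one_mem hn))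
    simp only [if_pos (P.mem_part (hn_one_mem hn))] at h1
    exact h1

lemma block1_mem_parts (hn : 1 ≤ n) : block1 n P ∈ P.parts := by
  rw [block1_eq_part hn]; exact P.part_mem.2 (hn_one_mem hn)

lemma one_mem_block1 (hn : 1 ≤ n) : 1 ∈ block1 n P := by
  rw [block1_eq_part hn]; exact P.mem_part (hn_one_mem hn)

variable (h1 : ({1} : Finset ℕ) ∉ P.parts)

include h1 in
lemma two_le_card_block1 (hn : 1 ≤ n) : 2 ≤ (block1 n P).card := by
  by_contra h
  push_neg at h
  interval_cases hc : (block1 n P).card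
  · exact absurd (Finset.card_eq_zero.1 hc ▸ one_mem_block1 hn) (Finset.notMem_empty 1)
  · obtain ⟨a, ha⟩ := Finset.card_eq_one.1 hc
    have h2 : (1 : ℕ) ∈ ({a} : Finset ℕ) := ha ▸ one_mem_block1 hn
    rw [Finset.mem_singleton] at h2
    rw [← h2] at ha
    exact h1 (ha ▸ block1_mem_parts hn)

include h1 in
lemma filter_nonempty (hn : 1 ≤ n) :
    ((P.parts.filter (fun B => 2 ≤ B.card)).image blockMax).Nonempty := by
  refine ⟨blockMax (block1 n P), Finset.mem_image_of_mem _ ?_⟩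
  exact Finset.mem_filter.2 ⟨block1_mem_parts hn, two_le_card_block1 h1 hn⟩

include h1 in
lemma rstat_exists (hn : 1 ≤ n) :
    ∃ B ∈ P.parts, 2 ≤ B.card ∧ blockMax B = rstat n P := by
  have hne := filter_nonempty h1 hn
  have : rstat n P ∈ (P.parts.filter (fun B => 2 ≤ B.card)).image blockMax := by
    rw [rstat, min_getD hne]
    exact Finset.min'_mem _ hne
  obtain ⟨B, hB, hBe⟩ := Finset.mem_image.1 this
  obtain ⟨hB1, hB2⟩ := Finset.mem_filter.1 hB
  exact ⟨B, hB1, hB2, hBe⟩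

include h1 in
lemma rstat_le (hn : 1 ≤ n) {B : Finset ℕ} (hB : B ∈ P.parts) (hc : 2 ≤ B.card) :
    rstat n P ≤ blockMax B := by
  have hne := filter_nonempty h1 hn
  rw [rstat, min_getD hne]
  exact Finset.min'_le _ _ (Finset.mem_image_of_mem _ (Finset.mem_filter.2 ⟨hB, hc⟩))

include h1 in
lemma two_le_rstat (hn : 1 ≤ n) : 2 ≤ rstat n P := by
  obtain ⟨B, hB, hc, he⟩ := rstat_exists h1 hn
  obtain ⟨a, ha, b, hb, hab⟩ := Finset.one_lt_card.1 hc
  rcases Nat.lt_or_ge a b with h | h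
  · have : 2 ≤ b := lt_of_le_of_lt (one_le_of_mem hB ha) h
    exact le_trans this (he ▸ le_blockMax hb)
  · have hba : b < a := lt_of_le_of_ne h (Ne.symm hab)
    have : 2 ≤ a := lt_of_le_of_lt (one_le_of_mem hB hb) hba
    exact le_trans this (he ▸ le_blockMax ha)

include h1 in
lemma rstat_le_blockMax_block1 (hn : 1 ≤ n) : rstat n P ≤ blockMax (block1 n P) :=
  rstat_le h1 hn (block1_mem_parts hn) (two_le_card_block1 h1 hn)

include h1 in
lemma one_lt_blockMax_of_two_le {B : Finset ℕ} (hB : B ∈ P.parts) (hc : 2 ≤ B.card) :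
    2 ≤ blockMax B := le_trans (two_le_rstat h1 (le_trans (one_le_of_mem hB (blockMax_mem (Finset.card_pos.1 (by omega)))) (Finset.mem_Icc.1 (parts_subset hB (blockMax_mem (Finset.card_pos.1 (by omega))))).2)) (rstat_le h1 (le_trans (one_le_of_mem hB (blockMax_mem (Finset.card_pos.1 (by omega)))) (Finset.mem_Icc.1 (parts_subset hB (blockMax_mem (Finset.card_pos.1 (by omega))))).2) hB hc)

lemma min'_eq_min' {s t : Finset ℕ} (hs : s.Nonempty) (ht : t.Nonempty)
    (hst : ∀ a ∈ s, ∃ b ∈ t, b ≤ a) (hts : ∀ b ∈ t, ∃ a ∈ s, a ≤ b) :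
    s.min' hs = t.min' ht := by
  apply le_antisymm
  · obtain ⟨a, ha, hle⟩ := hts _ (Finset.min'_mem t ht)
    exact le_trans (Finset.min'_le _ _ ha) hle
  · obtain ⟨b, hb, hle⟩ := hst _ (Finset.min'_mem s hs)
    exact le_trans (Finset.min'_le _ _ hb) hle

include h1 in
lemma X_eq (hn : 1 ≤ n) :
    X n P = (insert (rstat n P) (ASet n P)).min' (Finset.insert_nonempty _ _) := by
  have hps : (P.parts.image blockMax).Nonempty :=
    ⟨blockMax (block1 n P), Finset.mem_image_of_mem _ (block1_mem_parts hn)⟩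
  rw [X, min_getD hps]
  apply min'_eq_min'
  · intro a ha
    obtain ⟨B, hB, hBe⟩ := Finset.mem_image.1 ha
    rcases Nat.lt_or_ge B.card 2 with hc | hc
    · have hc1 : B.card = 1 := by
        have := Finset.card_pos.2 (P.nonempty_of_mem_parts hB); omega
      obtain ⟨c, hcB⟩ := Finset.card_eq_one.1 hc1
      subst hcB
      rw [blockMax_singleton] at hBe
      rcases Nat.lt_or_ge c (rstat n P) with h | h
      · refine ⟨c, Finset.mem_insert_of_mem ?_, hBe.le⟩
        exact Finset.mem_filter.2 ⟨parts_subset hB (Finset.mem_singleton_self c), hB, h⟩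
      · exact ⟨rstat n P, Finset.mem_insert_self _ _, hBe ▸ h⟩
    · exact ⟨rstat n P, Finset.mem_insert_self _ _, hBe ▸ rstat_le h1 hn hB hc⟩
  · intro b hb
    rcases Finset.mem_insert.1 hb with h | h
    · obtain ⟨B, hB, hc, he⟩ := rstat_exists h1 hn
      exact ⟨b, Finset.mem_image.2 ⟨B, hB, h ▸ he⟩, le_refl b⟩
    · obtain ⟨-, hsing, -⟩ := Finset.mem_filter.1 h
      exact ⟨b, Finset.mem_image.2 ⟨{b}, hsing, blockMax_singleton b⟩, le_refl b⟩

include h1 in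
lemma erase_nonempty (hn : 1 ≤ n) : ((block1 n P).erase 1).Nonempty := by
  have hc := two_le_card_block1 h1 hn
  rw [← Finset.card_pos, Finset.card_erase_of_mem (one_mem_block1 hn)]
  omega

lemma blockMin_block1 (hn : 1 ≤ n) : blockMin (block1 n P) = 1 := by
  have hne : (block1 n P).Nonempty := ⟨1, one_mem_block1 hn⟩
  rw [blockMin, min_getD hne]
  apply le_antisymm
  · exact Finset.min'_le _ _ (one_mem_block1 hn)
  · exact Finset.le_min' _ _ _ (fun y hy => one_le_of_mem (block1_mem_parts hn) hy)

include h1 in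
lemma secondMin_block1 (hn : 1 ≤ n) :
    secondMin (block1 n P) = ((block1 n P).erase 1).min' (erase_nonempty h1 hn) := by
  rw [secondMin, blockMin_block1 hn, min_getD (erase_nonempty h1 hn)]

include h1 in
lemma Y_eq (hn : 1 ≤ n) :
    Y n P = (insert (rstat n P) (CSet n P)).min' (Finset.insert_nonempty _ _) := by
  have hE := erase_nonempty h1 hn
  rw [Y, if_neg h1, ← rstat, secondMin_block1 h1 hn]
  set r := rstat n P with hr
  set s := ((block1 n P).erase 1).min' hE with hs
  apply le_antisymm
  · apply Finset.le_min'
    intro y hy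
    rcases Finset.mem_insert.1 hy with h | h
    · exact h ▸ min_le_left _ _
    · obtain ⟨hyB, hy1, hyr⟩ := Finset.mem_filter.1 h
      refine le_trans (min_le_right _ _) ?_
      exact Finset.min'_le _ _ (Finset.mem_erase.2 ⟨hy1, hyB⟩)
  · rcases Nat.lt_or_ge s r with h | h
    · have hsC : s ∈ CSet n P := by
        have hmem := Finset.min'_mem _ hE
        obtain ⟨hs1, hsB⟩ := Finset.mem_erase.1 hmem
        exact Finset.mem_filter.2 ⟨hsB, hs1, h⟩
      exact le_trans (Finset.min'_le _ _ (Finset.mem_insert_of_mem hsC)) (le_min h.le (le_refl s))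
    · exact le_trans (Finset.min'_le _ _ (Finset.mem_insert_self _ _))
        (le_min (le_refl r) h)

/-- remaining parts -/
def remaining (n : ℕ) (P : Finpartition (Finset.Icc 1 n)) : Finset (Finset ℕ) :=
  (P.parts.erase (block1 n P)) \ (ASet n P).image (fun x => {x})

lemma newParts_eq :
    newParts n P = remaining n P ∪ insert (newBig n P) ((CSet n P).image (fun x => {x})) := rfl

include h1 in
lemma ASet_disjoint_block1 (hn : 1 ≤ n) {a : ℕ} (ha : a ∈ ASet n P) : a ∉ block1 n P := by
  intro hab
  obtain ⟨hIcc, hsing, hlt⟩ := Finset.mem_filter.1 ha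
  have := P.eq_of_mem_parts hsing (block1_mem_parts hn) (Finset.mem_singleton_self a) hab
  have h1' : (1 : ℕ) ∈ ({a} : Finset ℕ) := this ▸ one_mem_block1 hn
  rw [Finset.mem_singleton] at h1'
  rw [← h1'] at hsing
  exact h1 hsing

lemma CSet_subset : CSet n P ⊆ block1 n P := Finset.filter_subset _ _

include h1 in
lemma singleton_CSet_not_mem (hn : 1 ≤ n) {c : ℕ} (hc : c ∈ CSet n P) :
    ({c} : Finset ℕ) ∉ P.parts := by
  intro hcs
  obtain ⟨hcB, hc1, hcr⟩ := Finset.mem_filter.1 hc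
  have := P.eq_of_mem_parts hcs (block1_mem_parts hn) (Finset.mem_singleton_self c) hcB
  have h1' : (1 : ℕ) ∈ ({c} : Finset ℕ) := this ▸ one_mem_block1 hn
  rw [Finset.mem_singleton] at h1'
  exact hc1 h1'.symm

include h1 in
lemma blockMax_block1_mem_newBig (hn : 1 ≤ n) :
    blockMax (block1 n P) ∈ newBig n P := by
  have hne : (block1 n P).Nonempty := ⟨1, one_mem_block1 hn⟩
  refine Finset.mem_union_left _ (Finset.mem_sdiff.2 ⟨blockMax_mem hne, ?_⟩)
  intro hmem
  obtain ⟨-, -, hlt⟩ := Finset.mem_filter.1 hmem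
  exact absurd hlt (not_lt.2 (rstat_le_blockMax_block1 h1 hn))

include h1 in
lemma one_mem_newBig (hn : 1 ≤ n) : 1 ∈ newBig n P := by
  refine Finset.mem_union_left _ (Finset.mem_sdiff.2 ⟨one_mem_block1 hn, ?_⟩)
  intro hmem
  exact (Finset.mem_filter.1 hmem).2.1 rfl

include h1 in
lemma two_le_card_newBig (hn : 1 ≤ n) : 2 ≤ (newBig n P).card := by
  have hmax := blockMax_block1_mem_newBig h1 hn
  have h1m := one_mem_newBig h1 hn
  have h2 : 2 ≤ blockMax (block1 n P) :=
    le_trans (two_le_rstat h1 hn) (rstat_le_blockMax_block1 h1 hn)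
  exact Finset.one_lt_card.2 ⟨_, hmax, _, h1m, by omega⟩

include h1 in
lemma newBig_subset (hn : 1 ≤ n) : newBig n P ⊆ Finset.Icc 1 n := by
  apply Finset.union_subset
  · exact (Finset.sdiff_subset).trans (parts_subset (block1_mem_parts hn))
  · exact Finset.filter_subset _ _

include h1 in
lemma disjoint_remaining_newBig (hn : 1 ≤ n) {D : Finset ℕ} (hD : D ∈ remaining n P) :
    Disjoint D (newBig n P) := by
  obtain ⟨hDe, hDA⟩ := Finset.mem_sdiff.1 hD
  have hDp := Finset.mem_of_mem_erase hDe
  have hDne := Finset.ne_of_mem_erase hDe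
  rw [newBig, Finset.disjoint_union_right]
  constructor
  · exact Finset.disjoint_of_subset_right Finset.sdiff_subset
      (P.disjoint hDp (block1_mem_parts hn) hDne)
  · rw [Finset.disjoint_right]
    intro a ha haD
    obtain ⟨hIcc, hsing, hlt⟩ := Finset.mem_filter.1 ha
    have := P.eq_of_mem_parts hDp hsing haD (Finset.mem_singleton_self a)
    exact hDA (this ▸ Finset.mem_image_of_mem _ ha)

include h1 in
lemma disjoint_remaining_Csingleton (hn : 1 ≤ n) {D : Finset ℕ} (hD : D ∈ remaining n P)
    {c : ℕ} (hc : c ∈ CSet n P) : Disjoint D ({c} : Finset ℕ) := by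
  obtain ⟨hDe, hDA⟩ := Finset.mem_sdiff.1 hD
  have hDp := Finset.mem_of_mem_erase hDe
  have hDne := Finset.ne_of_mem_erase hDe
  rw [Finset.disjoint_singleton_right]
  intro hcD
  exact Finset.disjoint_left.1 (P.disjoint hDp (block1_mem_parts hn) hDne) hcD (CSet_subset hc)

include h1 in
lemma disjoint_newBig_Csingleton (hn : 1 ≤ n) {c : ℕ} (hc : c ∈ CSet n P) :
    Disjoint (newBig n P) ({c} : Finset ℕ) := by
  rw [Finset.disjoint_singleton_right, newBig, Finset.mem_union]
  rintro (h | h)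
  · exact (Finset.mem_sdiff.1 h).2 hc
  · exact ASet_disjoint_block1 h1 hn h (CSet_subset hc)

include h1 in
lemma mem_newParts_iff (hn : 1 ≤ n) {D : Finset ℕ} :
    D ∈ newParts n P ↔ D ∈ remaining n P ∨ D = newBig n P ∨ ∃ c ∈ CSet n P, D = {c} := by
  rw [newParts_eq, Finset.mem_union, Finset.mem_insert]
  constructor
  · rintro (h | h | h)
    · exact Or.inl h
    · exact Or.inr (Or.inl h)
    · obtain ⟨c, hc, he⟩ := Finset.mem_image.1 h
      exact Or.inr (Or.inr ⟨c, hc, he.symm⟩)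
  · rintro (h | h | ⟨c, hc, he⟩)
    · exact Or.inl h
    · exact Or.inr (Or.inl h)
    · exact Or.inr (Or.inr (Finset.mem_image.2 ⟨c, hc, he.symm⟩))

include h1 in
lemma newParts_supIndep (hn : 1 ≤ n) : (newParts n P).SupIndep id := by
  rw [Finset.supIndep_iff_pairwiseDisjoint]
  intro D1 hD1 D2 hD2 hne
  simp only [Finset.mem_coe] at hD1 hD2
  rw [mem_newParts_iff h1 hn] at hD1 hD2
  have hCC : ∀ c ∈ CSet n P, ∀ c' ∈ CSet n P, ({c} : Finset ℕ) ≠ {c'} →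
      Disjoint ({c} : Finset ℕ) ({c'} : Finset ℕ) := by
    intro c _ c' _ h
    rw [Finset.disjoint_singleton_right, Finset.mem_singleton]
    intro hcc
    exact h (by rw [hcc])
  simp only [Function.onFun, id] at *
  rcases hD1 with h1' | rfl | ⟨c, hc, rfl⟩ <;> rcases hD2 with h2' | rfl | ⟨c', hc', rfl⟩
  · obtain ⟨he1, -⟩ := Finset.mem_sdiff.1 h1'
    obtain ⟨he2, -⟩ := Finset.mem_sdiff.1 h2'
    exact P.disjoint (Finset.mem_of_mem_erase he1) (Finset.mem_of_mem_erase he2) hne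
  · exact disjoint_remaining_newBig h1 hn h1'
  · exact disjoint_remaining_Csingleton h1 hn h1' hc'
  · exact (disjoint_remaining_newBig h1 hn h2').symm
  · exact absurd rfl hne
  · exact disjoint_newBig_Csingleton h1 hn hc'
  · exact (disjoint_remaining_Csingleton h1 hn h2' hc).symm
  · exact (disjoint_newBig_Csingleton h1 hn hc).symm
  · exact hCC c hc c' hc' hne


include h1 in
lemma newParts_sup (hn : 1 ≤ n) : (newParts n P).sup id = Finset.Icc 1 n := by
  apply le_antisymm
  · apply Finset.sup_le
    intro D hD
    rw [mem_newParts_iff h1 hn] at hD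
    rcases hD with h | h | ⟨c, hc, he⟩
    · exact parts_subset (Finset.mem_of_mem_erase (Finset.mem_sdiff.1 h).1)
    · exact h ▸ newBig_subset h1 hn
    · subst he
      exact Finset.singleton_subset_iff.2 (parts_subset (block1_mem_parts hn) (CSet_subset hc))
  · intro x hx
    rw [Finset.mem_sup]
    obtain ⟨D, hD, hxD⟩ := P.exists_mem hx
    by_cases hDb : D = block1 n P
    · subst hDb
      by_cases hxC : x ∈ CSet n P
      · exact ⟨{x}, (mem_newParts_iff h1 hn).2 (Or.inr (Or.inr ⟨x, hxC, rfl⟩)),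
          Finset.mem_singleton_self x⟩
      · exact ⟨newBig n P, (mem_newParts_iff h1 hn).2 (Or.inr (Or.inl rfl)),
          Finset.mem_union_left _ (Finset.mem_sdiff.2 ⟨hxD, hxC⟩)⟩
    · by_cases hDA : D ∈ (ASet n P).image (fun x => ({x} : Finset ℕ))
      · obtain ⟨a, ha, hae⟩ := Finset.mem_image.1 hDA
        have hxa : x = a := by
          rw [← hae, Finset.mem_singleton] at hxD; exact hxD
        exact ⟨newBig n P, (mem_newParts_iff h1 hn).2 (Or.inr (Or.inl rfl)),
          Finset.mem_union_right _ (hxa ▸ ha)⟩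
      · exact ⟨D, (mem_newParts_iff h1 hn).2 (Or.inl (Finset.mem_sdiff.2
          ⟨Finset.mem_erase.2 ⟨hDb, hD⟩, hDA⟩)), hxD⟩

include h1 in
lemma newParts_not_bot (hn : 1 ≤ n) : ⊥ ∉ newParts n P := by
  intro hbot
  rw [mem_newParts_iff h1 hn] at hbot
  rcases hbot with h | h | ⟨c, hc, he⟩
  · exact P.bot_notMem (Finset.mem_of_mem_erase (Finset.mem_sdiff.1 h).1)
  · exact absurd (h ▸ one_mem_newBig h1 hn) (Finset.notMem_empty 1)
  · exact Finset.singleton_ne_empty c he.symm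

end Basic

/-- The involution. -/
def sigmaFun (n : ℕ) (hn : 1 ≤ n) (P : Finpartition (Finset.Icc 1 n)) :
    Finpartition (Finset.Icc 1 n) :=
  if h : ({1} : Finset ℕ) ∈ P.parts then P
  else
    { parts := newParts n P
      supIndep := newParts_supIndep h hn
      sup_parts := newParts_sup h hn
      bot_notMem := newParts_not_bot h hn }

section Sigma

variable {n : ℕ} {P : Finpartition (Finset.Icc 1 n)} {hn : 1 ≤ n}
variable (h1 : ({1} : Finset ℕ) ∉ P.parts)

lemma min'_congr {s t : Finset ℕ} (hs : s.Nonempty) (ht : t.Nonempty) (h : s = t) :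
    s.min' hs = t.min' ht := by subst h; rfl

include h1 in
lemma sigmaFun_parts : (sigmaFun n hn P).parts = newParts n P := by
  rw [sigmaFun, dif_neg h1]

include h1 in
lemma newBig_mem_newParts (hn : 1 ≤ n) : newBig n P ∈ newParts n P :=
  (mem_newParts_iff h1 hn).2 (Or.inr (Or.inl rfl))

include h1 in
lemma one_not_singleton_sigma (hn' : 1 ≤ n) :
    ({1} : Finset ℕ) ∉ (sigmaFun n hn P).parts := by
  rw [sigmaFun_parts h1]
  intro hmem
  rcases (mem_newParts_iff h1 hn').1 hmem with h | h | ⟨c, hc, he⟩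
  · exact h1 (Finset.mem_of_mem_erase (Finset.mem_sdiff.1 h).1)
  · have := two_le_card_newBig h1 hn'
    rw [← h, Finset.card_singleton] at this
    omega
  · have : c = 1 := (Finset.singleton_inj.1 he.symm)
    exact (Finset.mem_filter.1 hc).2.1 this

include h1 in
lemma block1_sigma (hn' : 1 ≤ n) : block1 n (sigmaFun n hn P) = newBig n P := by
  rw [block1_eq_part hn']
  apply Finpartition.part_eq_of_mem
  · rw [sigmaFun_parts h1]; exact newBig_mem_newParts h1 hn'
  · exact one_mem_newBig h1 hn'

include h1 in
lemma blockMax_newBig (hn' : 1 ≤ n) : blockMax (newBig n P) = blockMax (block1 n P) := by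
  apply le_antisymm
  · apply Finset.sup_le
    intro x hx
    rcases Finset.mem_union.1 hx with h | h
    · exact le_blockMax (Finset.mem_sdiff.1 h).1
    · have hlt := (Finset.mem_filter.1 h).2.2
      have := rstat_le_blockMax_block1 h1 hn'
      simp only [id]
      omega
  · exact le_blockMax (blockMax_block1_mem_newBig h1 hn')

include h1 in
lemma filter_image_eq (hn' : 1 ≤ n) :
    ((newParts n P).filter (fun B => 2 ≤ B.card)).image blockMax =
      ((P.parts.filter (fun B => 2 ≤ B.card)).image blockMax) := by
  ext x
  simp only [Finset.mem_image, Finset.mem_filter]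
  constructor
  · rintro ⟨D, ⟨hD, hc⟩, he⟩
    rcases (mem_newParts_iff h1 hn').1 hD with h | h | ⟨c, hcC, hce⟩
    · exact ⟨D, ⟨Finset.mem_of_mem_erase (Finset.mem_sdiff.1 h).1, hc⟩, he⟩
    · subst h
      exact ⟨block1 n P, ⟨block1_mem_parts hn', two_le_card_block1 h1 hn'⟩,
        (blockMax_newBig h1 hn').symm ▸ he⟩
    · subst hce
      rw [Finset.card_singleton] at hc
      omega
  · rintro ⟨D, ⟨hD, hc⟩, he⟩
    by_cases hDb : D = block1 n P
    · subst hDb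
      exact ⟨newBig n P, ⟨newBig_mem_newParts h1 hn', two_le_card_newBig h1 hn'⟩,
        (blockMax_newBig h1 hn').trans he⟩
    · refine ⟨D, ⟨(mem_newParts_iff h1 hn').2 (Or.inl (Finset.mem_sdiff.2
        ⟨Finset.mem_erase.2 ⟨hDb, hD⟩, ?_⟩)), hc⟩, he⟩
      intro hDA
      obtain ⟨a, -, hae⟩ := Finset.mem_image.1 hDA
      rw [← hae, Finset.card_singleton] at hc
      omega

include h1 in
lemma rstat_sigma (hn' : 1 ≤ n) : rstat n (sigmaFun n hn P) = rstat n P := by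
  rw [rstat, rstat, sigmaFun_parts h1, filter_image_eq h1 hn']

include h1 in
lemma ASet_sigma (hn' : 1 ≤ n) : ASet n (sigmaFun n hn P) = CSet n P := by
  ext x
  simp only [ASet, Finset.mem_filter, rstat_sigma h1 hn', sigmaFun_parts h1]
  constructor
  · rintro ⟨hIcc, hmem, hlt⟩
    rcases (mem_newParts_iff h1 hn').1 hmem with h | h | ⟨c, hcC, hce⟩
    · obtain ⟨he, hA⟩ := Finset.mem_sdiff.1 h
      exact absurd (Finset.mem_image_of_mem _
        (Finset.mem_filter.2 ⟨hIcc, Finset.mem_of_mem_erase he, hlt⟩)) hA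
    · have := two_le_card_newBig h1 hn'
      rw [← h, Finset.card_singleton] at this
      omega
    · exact (Finset.singleton_inj.1 hce) ▸ hcC
  · intro hx
    have hlt := (Finset.mem_filter.1 hx).2.2
    refine ⟨parts_subset (block1_mem_parts hn') (CSet_subset hx), ?_, hlt⟩
    exact (mem_newParts_iff h1 hn').2 (Or.inr (Or.inr ⟨x, hx, rfl⟩))

include h1 in
lemma CSet_sigma (hn' : 1 ≤ n) : CSet n (sigmaFun n hn P) = ASet n P := by
  ext x
  simp only [CSet, Finset.mem_filter, rstat_sigma h1 hn', block1_sigma h1 hn']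
  constructor
  · rintro ⟨hmem, hx1, hlt⟩
    rcases Finset.mem_union.1 hmem with h | h
    · obtain ⟨hb, hnc⟩ := Finset.mem_sdiff.1 h
      exact absurd (Finset.mem_filter.2 ⟨hb, hx1, hlt⟩) hnc
    · exact h
  · intro hx
    obtain ⟨hIcc, hsing, hlt⟩ := Finset.mem_filter.1 hx
    refine ⟨Finset.mem_union_right _ hx, ?_, hlt⟩
    intro hx1
    exact h1 (hx1 ▸ hsing)

include h1 in
lemma newBig_sigma (hn' : 1 ≤ n) : newBig n (sigmaFun n hn P) = block1 n P := by
  rw [newBig, block1_sigma h1 hn', CSet_sigma h1 hn', ASet_sigma h1 hn']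
  ext y
  simp only [Finset.mem_union, Finset.mem_sdiff, newBig]
  constructor
  · rintro (⟨⟨hb', -⟩ | h', hA⟩ | hC)
    · exact hb'
    · exact absurd h' hA
    · exact CSet_subset hC
  · intro hy
    by_cases hyC : y ∈ CSet n P
    · exact Or.inr hyC
    · exact Or.inl ⟨Or.inl ⟨hy, hyC⟩, fun hA => ASet_disjoint_block1 h1 hn' hA hy⟩

include h1 in
lemma sigma_parts_eq (hn' : 1 ≤ n) : newParts n (sigmaFun n hn P) = P.parts := by
  have h1s := one_not_singleton_sigma (hn := hn) h1 hn'
  ext D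
  rw [mem_newParts_iff h1s hn']
  constructor
  · rintro (h | h | ⟨a, ha, hae⟩)
    · obtain ⟨he, -⟩ := Finset.mem_sdiff.1 h
      rw [block1_sigma h1 hn'] at he
      have hD := Finset.mem_of_mem_erase he
      rw [sigmaFun_parts h1] at hD
      rcases (mem_newParts_iff h1 hn').1 hD with h' | h' | ⟨c, hcC, hce⟩
      · exact Finset.mem_of_mem_erase (Finset.mem_sdiff.1 h').1
      · exact absurd h' (Finset.ne_of_mem_erase he)
      · exfalso
        obtain ⟨-, hsd⟩ := Finset.mem_sdiff.1 h
        rw [ASet_sigma h1 hn'] at hsd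
        exact hsd (hce ▸ Finset.mem_image_of_mem _ hcC)
    · rw [h, newBig_sigma h1 hn']
      exact block1_mem_parts hn'
    · rw [CSet_sigma h1 hn'] at ha
      exact hae ▸ (Finset.mem_filter.1 ha).2.1
  · intro hD
    by_cases hDb : D = block1 n P
    · exact Or.inr (Or.inl (hDb.trans (newBig_sigma h1 hn').symm))
    · by_cases hDA : D ∈ (ASet n P).image (fun x => ({x} : Finset ℕ))
      · obtain ⟨a, ha, hae⟩ := Finset.mem_image.1 hDA
        exact Or.inr (Or.inr ⟨a, by rw [CSet_sigma h1 hn']; exact ha, hae.symm⟩)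
      · have hDrem : D ∈ remaining n P :=
          Finset.mem_sdiff.2 ⟨Finset.mem_erase.2 ⟨hDb, hD⟩, hDA⟩
        refine Or.inl (Finset.mem_sdiff.2 ⟨Finset.mem_erase.2 ⟨?_, ?_⟩, ?_⟩)
        · rw [block1_sigma h1 hn']
          intro hDe
          have hdisj := disjoint_remaining_newBig h1 hn' hDrem
          rw [hDe] at hdisj
          exact (P.nonempty_of_mem_parts hD).ne_empty
            (by rw [hDe]; exact Finset.bot_eq_empty ▸ disjoint_self.1 hdisj)
        · rw [sigmaFun_parts h1]
          exact (mem_newParts_iff h1 hn').2 (Or.inl hDrem)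
        · rw [ASet_sigma h1 hn']
          intro hmem
          obtain ⟨c, hc, hce⟩ := Finset.mem_image.1 hmem
          exact singleton_CSet_not_mem h1 hn' hc (hce ▸ hD)

include h1 in
lemma sigma_sigma (hn' : 1 ≤ n) : sigmaFun n hn (sigmaFun n hn P) = P := by
  apply Finpartition.ext
  rw [sigmaFun_parts (one_not_singleton_sigma (hn := hn) h1 hn')]
  exact sigma_parts_eq h1 hn'

include h1 in
lemma X_sigma (hn' : 1 ≤ n) : X n (sigmaFun n hn P) = Y n P := by
  rw [X_eq (one_not_singleton_sigma (hn := hn) h1 hn') hn', Y_eq h1 hn']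
  exact min'_congr _ _ (by rw [rstat_sigma h1 hn', ASet_sigma h1 hn'])

include h1 in
lemma Y_sigma (hn' : 1 ≤ n) : Y n (sigmaFun n hn P) = X n P := by
  rw [Y_eq (one_not_singleton_sigma (hn := hn) h1 hn') hn', X_eq h1 hn']
  exact min'_congr _ _ (by rw [rstat_sigma h1 hn', CSet_sigma h1 hn'])

end Sigma

section One

variable {n : ℕ} {P : Finpartition (Finset.Icc 1 n)}

lemma X_eq_one (h : ({1} : Finset ℕ) ∈ P.parts) : X n P = 1 := by
  have hne : (P.parts.image blockMax).Nonempty := ⟨blockMax {1}, Finset.mem_image_of_mem _ h⟩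
  rw [X, min_getD hne]
  apply le_antisymm
  · have h2 : blockMax {1} ∈ P.parts.image blockMax := Finset.mem_image_of_mem _ h
    simpa [blockMax_singleton] using Finset.min'_le _ _ h2
  · apply Finset.le_min'
    intro y hy
    obtain ⟨B, hB, he⟩ := Finset.mem_image.1 hy
    have hBne := P.nonempty_of_mem_parts hB
    exact he ▸ one_le_of_mem hB (blockMax_mem hBne)

lemma Y_eq_one (h : ({1} : Finset ℕ) ∈ P.parts) : Y n P = 1 := if_pos h

end One

end Stmt3

/-- there is an involution σ on partitions of [n] interchanging X and Y;
hence the joint distribution of (X, Y) is symmetric and X, Y are equidistributed. -/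
theorem statement3 (n : ℕ) (hn : 1 ≤ n) :
    ∃ σ : Finpartition (Finset.Icc 1 n) → Finpartition (Finset.Icc 1 n),
      (∀ P, σ (σ P) = P) ∧
      (∀ P, X n (σ P) = Y n P ∧ Y n (σ P) = X n P) ∧
      (∀ a b : ℕ,
        Nat.card {P : Finpartition (Finset.Icc 1 n) // X n P = a ∧ Y n P = b} =
        Nat.card {P : Finpartition (Finset.Icc 1 n) // X n P = b ∧ Y n P = a}) ∧
      (∀ k : ℕ,
        Nat.card {P : Finpartition (Finset.Icc 1 n) // X n P = k} =
        Nat.card {P : Finpartition (Finset.Icc 1 n) // Y n P = k}) := by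
  have hinv : ∀ P, Stmt3.sigmaFun n hn (Stmt3.sigmaFun n hn P) = P := by
    intro P
    by_cases h : ({1} : Finset ℕ) ∈ P.parts
    · have hfix : Stmt3.sigmaFun n hn P = P := by rw [Stmt3.sigmaFun, dif_pos h]
      rw [hfix, hfix]
    · exact Stmt3.sigma_sigma h hn
  have hswap : ∀ P, X n (Stmt3.sigmaFun n hn P) = Y n P ∧
      Y n (Stmt3.sigmaFun n hn P) = X n P := by
    intro P
    by_cases h : ({1} : Finset ℕ) ∈ P.parts
    · have hfix : Stmt3.sigmaFun n hn P = P := by rw [Stmt3.sigmaFun, dif_pos h]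
      rw [hfix, Stmt3.X_eq_one h, Stmt3.Y_eq_one h]
      exact ⟨rfl, rfl⟩
    · exact ⟨Stmt3.X_sigma h hn, Stmt3.Y_sigma h hn⟩
  refine ⟨Stmt3.sigmaFun n hn, hinv, hswap, ?_, ?_⟩
  · intro a b
    exact Nat.card_congr
      ⟨fun p => ⟨_, (hswap p.1).1.trans p.2.2, (hswap p.1).2.trans p.2.1⟩,
       fun p => ⟨_, (hswap p.1).1.trans p.2.2, (hswap p.1).2.trans p.2.1⟩,
       fun p => Subtype.ext (hinv p.1), fun p => Subtype.ext (hinv p.1)⟩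
  · intro k
    exact Nat.card_congr
      ⟨fun p => ⟨_, (hswap p.1).2.trans p.2⟩,
       fun p => ⟨_, (hswap p.1).1.trans p.2⟩,
       fun p => Subtype.ext (hinv p.1), fun p => Subtype.ext (hinv p.1)⟩
end

section
/- The involution σ on set partitions of [n] preserves the multiset of spans of non-singleton blocks, and therefore maps nonoverlapping partitions to nonoverlapping partitions. Hence X and Y are equidistributed on nonoverlapping partitions of [n]. -/
namespace Stmt4

/-- min with default 0 -/
def fmin (t : Finset ℕ) : ℕ := t.min.getD 0

lemma fmin_eq_min' {t : Finset ℕ} (h : t.Nonempty) : fmin t = t.min' h := by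
  rw [fmin, ← Finset.coe_min' h]; rfl

lemma fmin_mem {t : Finset ℕ} (h : t.Nonempty) : fmin t ∈ t := by
  rw [fmin_eq_min' h]; exact t.min'_mem h

lemma fmin_le {t : Finset ℕ} {x : ℕ} (hx : x ∈ t) : fmin t ≤ x := by
  rw [fmin_eq_min' ⟨x, hx⟩]; exact t.min'_le x hx

lemma fmin_eq {t : Finset ℕ} {v : ℕ} (hv : v ∈ t) (hle : ∀ x ∈ t, v ≤ x) :
    fmin t = v :=
  le_antisymm (fmin_le hv) (hle _ (fmin_mem ⟨v, hv⟩))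

lemma blockMax_eq_max' {B : Finset ℕ} (h : B.Nonempty) : blockMax B = B.max' h := by
  rw [blockMax, Finset.max', Finset.sup'_eq_sup]

lemma blockMax_mem {B : Finset ℕ} (h : B.Nonempty) : blockMax B ∈ B := by
  rw [blockMax_eq_max' h]; exact B.max'_mem h

lemma le_blockMax {B : Finset ℕ} {x : ℕ} (hx : x ∈ B) : x ≤ blockMax B :=
  Finset.le_sup (f := id) hx

lemma blockMin_eq_fmin (B : Finset ℕ) : blockMin B = fmin B := rfl

lemma blockMin_mem {B : Finset ℕ} (h : B.Nonempty) : blockMin B ∈ B := fmin_mem h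

lemma blockMin_le {B : Finset ℕ} {x : ℕ} (hx : x ∈ B) : blockMin B ≤ x := fmin_le hx

lemma blockMax_singleton (a : ℕ) : blockMax {a} = a := by
  simp [blockMax]

lemma blockMin_singleton (a : ℕ) : blockMin {a} = a := by
  rw [blockMin, Finset.min_singleton]; rfl

lemma card_eq_one_iff_max {B : Finset ℕ} (h : B.Nonempty) :
    B.card = 1 → B = {blockMax B} := by
  intro hc
  obtain ⟨a, ha⟩ := Finset.card_eq_one.1 hc
  subst ha; rw [blockMax_singleton]

section
variable {n : ℕ} {P : Finpartition (Finset.Icc 1 n)}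

lemma part_nonempty {B : Finset ℕ} (hB : B ∈ P.parts) : B.Nonempty :=
  P.nonempty_of_mem_parts hB

lemma part_subset {B : Finset ℕ} (hB : B ∈ P.parts) : B ⊆ Finset.Icc 1 n :=
  P.le hB

lemma mem_bounds {B : Finset ℕ} (hB : B ∈ P.parts) {x : ℕ} (hx : x ∈ B) :
    1 ≤ x ∧ x ≤ n := by
  have := part_subset hB hx; rw [Finset.mem_Icc] at this; exact this

lemma one_le_blockMax {B : Finset ℕ} (hB : B ∈ P.parts) : 1 ≤ blockMax B :=
  (mem_bounds hB (blockMax_mem (part_nonempty hB))).1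

lemma parts_disjoint {A B : Finset ℕ} (hA : A ∈ P.parts) (hB : B ∈ P.parts)
    (hAB : A ≠ B) : Disjoint A B :=
  P.disjoint hA hB hAB

lemma block1_eq {B : Finset ℕ} (hB : B ∈ P.parts) (h1 : (1:ℕ) ∈ B) :
    block1 n P = B := by
  unfold block1
  apply le_antisymm
  · apply Finset.sup_le
    intro C hC
    by_cases h : (1:ℕ) ∈ C
    · rw [if_pos h, P.eq_of_mem_parts hC hB h h1]
    · rw [if_neg h]; exact Finset.empty_subset _
  · have := Finset.le_sup (f := fun B : Finset ℕ => if 1 ∈ B then B else ∅) hB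
    simpa [h1] using this

lemma X_le {B : Finset ℕ} (hB : B ∈ P.parts) : X n P ≤ blockMax B :=
  fmin_le (Finset.mem_image_of_mem _ hB)

lemma exists_X (h : P.parts.Nonempty) : ∃ B ∈ P.parts, blockMax B = X n P := by
  have : fmin (P.parts.image blockMax) ∈ P.parts.image blockMax :=
    fmin_mem (h.image _)
  rw [Finset.mem_image] at this
  obtain ⟨B, hB, hBe⟩ := this
  exact ⟨B, hB, hBe⟩

lemma X_eq {v : ℕ} (hmem : ∃ B ∈ P.parts, blockMax B = v)
    (hle : ∀ B ∈ P.parts, v ≤ blockMax B) : X n P = v := by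
  obtain ⟨B, hB, hBe⟩ := hmem
  refine fmin_eq (hBe ▸ Finset.mem_image_of_mem _ hB) ?_
  intro x hx
  rw [Finset.mem_image] at hx
  obtain ⟨C, hC, hCe⟩ := hx
  exact hCe ▸ hle C hC

/-- r statistic -/
def rS (n : ℕ) (P : Finpartition (Finset.Icc 1 n)) : ℕ :=
  fmin ((P.parts.filter (fun B => 2 ≤ B.card)).image blockMax)

lemma Y_def' (h1 : ({1} : Finset ℕ) ∉ P.parts) :
    Y n P = min (rS n P) (secondMin (block1 n P)) := by
  rw [Y, if_neg h1]; rfl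

lemma rS_le {B : Finset ℕ} (hB : B ∈ P.parts) (hc : 2 ≤ B.card) :
    rS n P ≤ blockMax B :=
  fmin_le (Finset.mem_image_of_mem _ (Finset.mem_filter.2 ⟨hB, hc⟩))

lemma exists_rS (h : ∃ B ∈ P.parts, 2 ≤ B.card) :
    ∃ B ∈ P.parts, 2 ≤ B.card ∧ blockMax B = rS n P := by
  obtain ⟨B, hB, hc⟩ := h
  have hne : ((P.parts.filter (fun B => 2 ≤ B.card)).image blockMax).Nonempty :=
    ⟨blockMax B, Finset.mem_image_of_mem _ (Finset.mem_filter.2 ⟨hB, hc⟩)⟩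
  have := fmin_mem hne
  rw [Finset.mem_image] at this
  obtain ⟨C, hC, hCe⟩ := this
  rw [Finset.mem_filter] at hC
  exact ⟨C, hC.1, hC.2, hCe⟩

end
end Stmt4

namespace Stmt4
section
variable {s : Finset ℕ}

def Valid (P : Finpartition s) (D A : Finset (Finset ℕ)) : Prop :=
  D ⊆ P.parts ∧ A.sup id = D.sup id ∧
    (A : Set (Finset ℕ)).PairwiseDisjoint id ∧ ⊥ ∉ A

lemma valid_cross {P : Finpartition s} {D A : Finset (Finset ℕ)} (h : Valid P D A)
    {x y : Finset ℕ} (hx : x ∈ P.parts \ D) (hy : y ∈ A) : Disjoint x y := by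
  rw [Finset.mem_sdiff] at hx
  have hyD : y ≤ D.sup id := h.2.1 ▸ Finset.le_sup (f := id) hy
  refine Disjoint.mono_right hyD ?_
  refine Finset.disjoint_sup_right.2 ?_
  intro d hd
  exact P.disjoint hx.1 (h.1 hd) (fun he => hx.2 (he ▸ hd))

open Classical in
noncomputable def replaceParts (P : Finpartition s) (D A : Finset (Finset ℕ)) :
    Finpartition s :=
  if h : Valid P D A then
    { parts := (P.parts \ D) ∪ A
      supIndep := by
        rw [Finset.supIndep_iff_pairwiseDisjoint]
        intro x hx y hy hxy
        rw [Finset.coe_union, Set.mem_union] at hx hy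
        rcases hx with hx | hx <;> rcases hy with hy | hy
        · exact P.disjoint (Finset.mem_sdiff.1 hx).1 (Finset.mem_sdiff.1 hy).1 hxy
        · exact valid_cross h hx hy
        · exact (valid_cross h hy hx).symm
        · exact h.2.2.1 hx hy hxy
      sup_parts := by
        rw [Finset.sup_union, h.2.1, ← Finset.sup_union,
          Finset.sdiff_union_of_subset h.1, P.sup_parts]
      bot_notMem := by
        rw [Finset.mem_union]
        rintro (hb | hb)
        · exact P.bot_notMem (Finset.mem_sdiff.1 hb).1
        · exact h.2.2.2 hb }
  else P

lemma replaceParts_parts {P : Finpartition s} {D A : Finset (Finset ℕ)}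
    (h : Valid P D A) : (replaceParts P D A).parts = (P.parts \ D) ∪ A := by
  rw [replaceParts, dif_pos h]
end
end Stmt4

namespace Stmt4
section
variable {n : ℕ} {P : Finpartition (Finset.Icc 1 n)}

/-- Shared facts base. -/
structure Base (n : ℕ) (P : Finpartition (Finset.Icc 1 n)) : Prop where
  hn : 1 ≤ n
  not1 : ({1} : Finset ℕ) ∉ P.parts

lemma one_mem_Icc (hn : 1 ≤ n) : (1:ℕ) ∈ Finset.Icc 1 n := by
  rw [Finset.mem_Icc]; omega

lemma b1_mem_and (hn : 1 ≤ n) : block1 n P ∈ P.parts ∧ (1:ℕ) ∈ block1 n P := by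
  obtain ⟨B, hB, h1⟩ := P.exists_mem (one_mem_Icc hn)
  rw [block1_eq hB h1]; exact ⟨hB, h1⟩

lemma Base.b1_mem (hB : Base n P) : block1 n P ∈ P.parts := (b1_mem_and hB.hn).1
lemma Base.one_mem_b1 (hB : Base n P) : (1:ℕ) ∈ block1 n P := (b1_mem_and hB.hn).2

lemma X_pos' (hn : 1 ≤ n) : 1 ≤ X n P := by
  obtain ⟨B, hBp, hBe⟩ := exists_X (P := P) ⟨_, (b1_mem_and hn).1⟩
  exact hBe ▸ one_le_blockMax hBp

lemma Base.X_pos (hB : Base n P) : 1 ≤ X n P := X_pos' hB.hn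

lemma base_of_ne (hn : 1 ≤ n) (hne : X n P ≠ Y n P) : Base n P := by
  refine ⟨hn, fun h1 => hne ?_⟩
  have hX : X n P ≤ 1 := by
    have := X_le h1; rwa [blockMax_singleton] at this
  have hXp : 1 ≤ X n P := X_pos' hn
  rw [Y, if_pos h1]; omega

lemma Base.card2 (hB : Base n P) : 2 ≤ (block1 n P).card := by
  by_contra h
  push_neg at h
  have h1 : (block1 n P).card = 1 := by
    have : 0 < (block1 n P).card := Finset.card_pos.2 ⟨1, hB.one_mem_b1⟩
    omega
  obtain ⟨a, ha⟩ := Finset.card_eq_one.1 h1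
  have ha1 : a = 1 := by
    have := hB.one_mem_b1; rw [ha, Finset.mem_singleton] at this; omega
  subst ha1; exact hB.not1 (ha ▸ hB.b1_mem)

lemma Base.erase_ne (hB : Base n P) : ((block1 n P).erase 1).Nonempty := by
  rw [← Finset.card_pos, Finset.card_erase_of_mem hB.one_mem_b1]
  have := hB.card2; omega

lemma Base.blockMin_b1 (hB : Base n P) : blockMin (block1 n P) = 1 :=
  fmin_eq hB.one_mem_b1 (fun x hx => (mem_bounds hB.b1_mem hx).1)

lemma Base.secondMin_eq (hB : Base n P) :
    secondMin (block1 n P) = fmin ((block1 n P).erase 1) := by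
  rw [secondMin, hB.blockMin_b1]; rfl

lemma Base.s_mem_erase (hB : Base n P) :
    secondMin (block1 n P) ∈ (block1 n P).erase 1 := by
  rw [hB.secondMin_eq]; exact fmin_mem hB.erase_ne

lemma Base.s_mem (hB : Base n P) : secondMin (block1 n P) ∈ block1 n P :=
  Finset.mem_of_mem_erase hB.s_mem_erase

lemma Base.s_ne_one (hB : Base n P) : secondMin (block1 n P) ≠ 1 :=
  Finset.ne_of_mem_erase hB.s_mem_erase

lemma Base.two_le_s (hB : Base n P) : 2 ≤ secondMin (block1 n P) := by
  have h1 := (mem_bounds hB.b1_mem hB.s_mem).1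
  have := hB.s_ne_one; omega

lemma Base.s_le (hB : Base n P) {x : ℕ} (hx : x ∈ block1 n P) (hx1 : x ≠ 1) :
    secondMin (block1 n P) ≤ x := by
  rw [hB.secondMin_eq]; exact fmin_le (Finset.mem_erase.2 ⟨hx1, hx⟩)

lemma Base.exists_r (hB : Base n P) :
    ∃ B ∈ P.parts, 2 ≤ B.card ∧ blockMax B = rS n P :=
  exists_rS ⟨_, hB.b1_mem, hB.card2⟩

lemma Base.r_le_max_b1 (hB : Base n P) : rS n P ≤ blockMax (block1 n P) :=
  rS_le hB.b1_mem hB.card2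

lemma two_le_max_of_card {B : Finset ℕ} (hB : B ∈ P.parts) (hc : 2 ≤ B.card) :
    2 ≤ blockMax B := by
  by_contra h
  push_neg at h
  have : B.card ≤ 1 := by
    rw [Finset.card_le_one]
    intro a ha b hb
    have h1 := (mem_bounds hB ha).1
    have h2 := (mem_bounds hB hb).1
    have h3 := le_blockMax ha
    have h4 := le_blockMax hb
    omega
  omega

lemma Base.two_le_r (hB : Base n P) : 2 ≤ rS n P := by
  obtain ⟨B, hBp, hc, he⟩ := hB.exists_r
  exact he ▸ two_le_max_of_card hBp hc

lemma Base.two_le_max_b1 (hB : Base n P) : 2 ≤ blockMax (block1 n P) :=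
  two_le_max_of_card hB.b1_mem hB.card2

lemma Base.s_le_max (hB : Base n P) :
    secondMin (block1 n P) ≤ blockMax (block1 n P) := by
  refine hB.s_le (blockMax_mem (part_nonempty hB.b1_mem)) ?_
  have := hB.two_le_max_b1; omega

lemma Base.not_sing_r (hB : Base n P) : ({rS n P} : Finset ℕ) ∉ P.parts := by
  intro h
  obtain ⟨B, hBp, hc, he⟩ := hB.exists_r
  have hrB : rS n P ∈ B := he ▸ blockMax_mem (part_nonempty hBp)
  have := P.eq_of_mem_parts h hBp (Finset.mem_singleton_self _) hrB
  rw [← this] at hc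
  simp at hc

lemma Base.X_le_r (hB : Base n P) : X n P ≤ rS n P := by
  obtain ⟨B, hBp, _, he⟩ := hB.exists_r
  exact he ▸ X_le hBp

lemma Base.Y_eq (hB : Base n P) :
    Y n P = min (rS n P) (secondMin (block1 n P)) := Y_def' hB.not1

lemma Base.sing_facts (hB : Base n P) {k : ℕ} (hk : ({k} : Finset ℕ) ∈ P.parts) :
    2 ≤ k ∧ k ≤ n ∧ X n P ≤ k ∧ k ∉ block1 n P := by
  have hb := mem_bounds hk (Finset.mem_singleton_self k)
  have hk1 : k ≠ 1 := fun h => hB.not1 (h ▸ hk)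
  have hX : X n P ≤ k := by
    have := X_le hk; rwa [blockMax_singleton] at this
  have hnb : k ∉ block1 n P := by
    intro hmem
    have := P.eq_of_mem_parts hk hB.b1_mem (Finset.mem_singleton_self _) hmem
    have h1 : (1:ℕ) ∈ ({k} : Finset ℕ) := this ▸ hB.one_mem_b1
    rw [Finset.mem_singleton] at h1
    exact hk1 h1.symm
  exact ⟨by omega, hb.2, hX, hnb⟩

lemma Base.Y_le_s (hB : Base n P) : Y n P ≤ secondMin (block1 n P) := by
  rw [hB.Y_eq]; exact min_le_right _ _

lemma Base.Y_le_r (hB : Base n P) : Y n P ≤ rS n P := by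
  rw [hB.Y_eq]; exact min_le_left _ _

end
end Stmt4

namespace Stmt4

def Mf (n : ℕ) (P : Finpartition (Finset.Icc 1 n)) : Finset ℕ :=
  (Finset.Icc 1 n).filter fun k => k < Y n P ∧ ({k} : Finset ℕ) ∈ P.parts

def cf (n : ℕ) (P : Finpartition (Finset.Icc 1 n)) : Finset ℕ :=
  if secondMin (block1 n P) < rS n P then
    ((block1 n P).erase (secondMin (block1 n P))) ∪ Mf n P
  else block1 n P ∪ Mf n P

def Df (n : ℕ) (P : Finpartition (Finset.Icc 1 n)) : Finset (Finset ℕ) :=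
  insert (block1 n P) ((Mf n P).image fun k => ({k} : Finset ℕ))

def Af (n : ℕ) (P : Finpartition (Finset.Icc 1 n)) : Finset (Finset ℕ) :=
  if secondMin (block1 n P) < rS n P then {cf n P, {secondMin (block1 n P)}}
  else {cf n P}

def Rb (n : ℕ) (P : Finpartition (Finset.Icc 1 n)) : Finset ℕ :=
  (block1 n P).filter fun x => 1 < x ∧ x < X n P

def cb (n : ℕ) (P : Finpartition (Finset.Icc 1 n)) : Finset ℕ :=
  if X n P < rS n P then insert (X n P) (block1 n P \ Rb n P)
  else block1 n P \ Rb n P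

def Db (n : ℕ) (P : Finpartition (Finset.Icc 1 n)) : Finset (Finset ℕ) :=
  if X n P < rS n P then {block1 n P, {X n P}} else {block1 n P}

def Ab (n : ℕ) (P : Finpartition (Finset.Icc 1 n)) : Finset (Finset ℕ) :=
  insert (cb n P) ((Rb n P).image fun k => ({k} : Finset ℕ))

open Classical in
noncomputable def sig (n : ℕ) (P : Finpartition (Finset.Icc 1 n)) :
    Finpartition (Finset.Icc 1 n) :=
  if 1 ≤ n ∧ X n P < Y n P then replaceParts P (Df n P) (Af n P)
  else if 1 ≤ n ∧ Y n P < X n P then replaceParts P (Db n P) (Ab n P)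
  else P

section
variable {n : ℕ} {P : Finpartition (Finset.Icc 1 n)}

structure Fwd (n : ℕ) (P : Finpartition (Finset.Icc 1 n)) extends Base n P : Prop where
  hxy : X n P < Y n P

structure Bwd (n : ℕ) (P : Finpartition (Finset.Icc 1 n)) extends Base n P : Prop where
  hyx : Y n P < X n P

lemma mem_Mf (hB : Base n P) {k : ℕ} :
    k ∈ Mf n P ↔ k < Y n P ∧ ({k} : Finset ℕ) ∈ P.parts := by
  rw [Mf, Finset.mem_filter, and_iff_right_iff_imp]
  rintro ⟨-, hk⟩
  exact part_subset hk (Finset.mem_singleton_self k)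

lemma Mf_facts (hB : Base n P) {k : ℕ} (hk : k ∈ Mf n P) :
    2 ≤ k ∧ k < Y n P ∧ ({k} : Finset ℕ) ∈ P.parts ∧ k ∉ block1 n P := by
  rw [mem_Mf hB] at hk
  obtain ⟨h2, _, _, hnb⟩ := hB.sing_facts hk.2
  exact ⟨h2, hk.1, hk.2, hnb⟩

lemma mem_b1_not_sing (hB : Base n P) {k : ℕ} (hk : k ∈ block1 n P) :
    ({k} : Finset ℕ) ∉ P.parts := fun h => (hB.sing_facts h).2.2.2 hk

lemma Fwd.X_lt_r (hF : Fwd n P) : X n P < rS n P :=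
  lt_of_lt_of_le hF.hxy hF.toBase.Y_le_r

lemma Fwd.X_lt_s (hF : Fwd n P) : X n P < secondMin (block1 n P) :=
  lt_of_lt_of_le hF.hxy hF.toBase.Y_le_s

lemma Fwd.X_sing (hF : Fwd n P) : ({X n P} : Finset ℕ) ∈ P.parts := by
  obtain ⟨B, hBp, hBe⟩ := exists_X (P := P) ⟨_, hF.toBase.b1_mem⟩
  have hc : B.card = 1 := by
    by_contra hc
    have h2 : 2 ≤ B.card := by
      have := Finset.card_pos.2 (part_nonempty hBp); omega
    have := rS_le hBp h2
    have := hF.X_lt_r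
    omega
  have := card_eq_one_iff_max (part_nonempty hBp) hc
  rw [this, hBe] at hBp
  exact hBp

lemma Fwd.X_mem_Mf (hF : Fwd n P) : X n P ∈ Mf n P :=
  (mem_Mf hF.toBase).2 ⟨hF.hxy, hF.X_sing⟩

lemma Fwd.Mf_ne (hF : Fwd n P) : (Mf n P).Nonempty := ⟨_, hF.X_mem_Mf⟩

lemma Fwd.one_mem_cf (hF : Fwd n P) : (1:ℕ) ∈ cf n P := by
  have h1 := hF.toBase.one_mem_b1
  have hs := hF.toBase.s_ne_one
  by_cases hsr : secondMin (block1 n P) < rS n P <;>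
    simp [cf, hsr, Finset.mem_union, Finset.mem_erase, h1, Ne.symm hs]

lemma Fwd.X_mem_cf (hF : Fwd n P) : X n P ∈ cf n P := by
  have := hF.X_mem_Mf
  by_cases hsr : secondMin (block1 n P) < rS n P <;>
    simp [cf, hsr, Finset.mem_union, this]

lemma Fwd.cf_card2 (hF : Fwd n P) : 2 ≤ (cf n P).card := by
  refine Finset.one_lt_card.2 ⟨1, hF.one_mem_cf, X n P, hF.X_mem_cf, ?_⟩
  have h2 := (Mf_facts hF.toBase hF.X_mem_Mf).1
  omega

lemma Fwd.mem_cf_elim (hF : Fwd n P) {x : ℕ} (hx : x ∈ cf n P) :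
    x ∈ block1 n P ∨ x ∈ Mf n P := by
  by_cases hsr : secondMin (block1 n P) < rS n P <;>
    simp only [cf, hsr, if_true, if_false, Finset.mem_union, Finset.mem_erase] at hx <;>
    tauto

lemma Fwd.blockMax_cf (hF : Fwd n P) :
    blockMax (cf n P) = blockMax (block1 n P) := by
  apply le_antisymm
  · apply Finset.sup_le
    intro x hx
    rcases hF.mem_cf_elim hx with h | h
    · exact le_blockMax h
    · have hk := (Mf_facts hF.toBase h).2.1
      have := hF.toBase.Y_le_r
      have := hF.toBase.r_le_max_b1
      simp only [id]
      omega
  · refine le_blockMax ?_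
    have hmem := blockMax_mem (part_nonempty hF.toBase.b1_mem)
    by_cases hsr : secondMin (block1 n P) < rS n P <;>
      simp only [cf, hsr, if_true, if_false, Finset.mem_union, Finset.mem_erase]
    · left
      refine ⟨?_, hmem⟩
      have := hF.toBase.r_le_max_b1
      omega
    · left; exact hmem

lemma Fwd.s_notMem_cf (hF : Fwd n P) (hsr : secondMin (block1 n P) < rS n P) :
    secondMin (block1 n P) ∉ cf n P := by
  simp only [cf, hsr, if_true, Finset.mem_union, Finset.mem_erase]
  rintro (⟨h, -⟩ | h)
  · exact h rfl
  · have := (Mf_facts hF.toBase h).2.1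
    have := hF.toBase.Y_le_s
    omega

lemma sup_image_single (t : Finset ℕ) :
    ((t.image fun k => ({k} : Finset ℕ)).sup id) = t := by
  ext x
  rw [Finset.mem_sup]
  simp

lemma Df_sup (hB : Base n P) : (Df n P).sup id = block1 n P ∪ Mf n P := by
  rw [Df, Finset.sup_insert, sup_image_single]; rfl

lemma Fwd.Af_sup (hF : Fwd n P) : (Af n P).sup id = block1 n P ∪ Mf n P := by
  by_cases hsr : secondMin (block1 n P) < rS n P
  · simp only [Af, cf, hsr, if_true]
    rw [Finset.sup_insert, Finset.sup_singleton]
    ext x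
    simp only [id_eq, Finset.sup_eq_union, Finset.mem_union, Finset.mem_erase,
      Finset.mem_singleton]
    constructor
    · rintro ((⟨-, h⟩ | h) | h)
      · exact Or.inl h
      · exact Or.inr h
      · subst h; exact Or.inl hF.toBase.s_mem
    · rintro (h | h)
      · by_cases hx : x = secondMin (block1 n P)
        · exact Or.inr hx
        · exact Or.inl (Or.inl ⟨hx, h⟩)
      · exact Or.inl (Or.inr h)
  · simp only [Af, cf, hsr, if_false]
    rw [Finset.sup_singleton]; rfl

lemma Fwd.valid (hF : Fwd n P) : Valid P (Df n P) (Af n P) := by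
  refine ⟨?_, ?_, ?_, ?_⟩
  · intro C hC
    rw [Df, Finset.mem_insert] at hC
    rcases hC with h | h
    · exact h ▸ hF.toBase.b1_mem
    · rw [Finset.mem_image] at h
      obtain ⟨k, hk, he⟩ := h
      exact he ▸ (Mf_facts hF.toBase hk).2.2.1
  · rw [hF.Af_sup, Df_sup hF.toBase]
  · intro x hx y hy hxy
    by_cases hsr : secondMin (block1 n P) < rS n P <;>
      simp only [Af, hsr, if_true, if_false, Finset.coe_insert, Finset.coe_singleton,
        Set.mem_insert_iff, Set.mem_singleton_iff] at hx hy
    · have hd : Disjoint (cf n P) ({secondMin (block1 n P)} : Finset ℕ) :=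
        Finset.disjoint_singleton_right.2 (hF.s_notMem_cf hsr)
      rcases hx with hx | hx <;> rcases hy with hy | hy <;>
        first
          | (exact absurd (hx.trans hy.symm) hxy)
          | (subst hx; subst hy; exact hd)
          | (subst hx; subst hy; exact hd.symm)
    · subst hx; subst hy; exact absurd rfl hxy
  · intro h
    by_cases hsr : secondMin (block1 n P) < rS n P <;>
      simp only [Af, hsr, if_true, if_false, Finset.mem_insert, Finset.mem_singleton] at h
    · rcases h with h | h
      · exact absurd (h ▸ hF.one_mem_cf : (1:ℕ) ∈ (⊥ : Finset ℕ)) (by simp)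
      · exact absurd (h ▸ Finset.mem_singleton_self _ :
          secondMin (block1 n P) ∈ (⊥ : Finset ℕ)) (by simp)
    · exact absurd (h ▸ hF.one_mem_cf : (1:ℕ) ∈ (⊥ : Finset ℕ)) (by simp)

lemma Fwd.parts_sig (hF : Fwd n P) :
    (sig n P).parts = (P.parts \ Df n P) ∪ Af n P := by
  rw [sig, if_pos ⟨hF.hn, hF.hxy⟩, replaceParts_parts hF.valid]

end
end Stmt4

namespace Stmt4
section
variable {n : ℕ} {P : Finpartition (Finset.Icc 1 n)}

lemma rS_eq {v : ℕ} (hmem : ∃ B ∈ P.parts, 2 ≤ B.card ∧ blockMax B = v)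
    (hle : ∀ B ∈ P.parts, 2 ≤ B.card → v ≤ blockMax B) : rS n P = v := by
  obtain ⟨B, hB, hc, hBe⟩ := hmem
  refine fmin_eq (hBe ▸ Finset.mem_image_of_mem _ (Finset.mem_filter.2 ⟨hB, hc⟩)) ?_
  intro x hx
  rw [Finset.mem_image] at hx
  obtain ⟨C, hC, hCe⟩ := hx
  rw [Finset.mem_filter] at hC
  exact hCe ▸ hle C hC.1 hC.2

lemma mem_Df_iff {C : Finset ℕ} :
    C ∈ Df n P ↔ C = block1 n P ∨ ∃ k ∈ Mf n P, C = {k} := by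
  simp only [Df, Finset.mem_insert, Finset.mem_image]
  constructor
  · rintro (h | ⟨k, hk, he⟩)
    · exact Or.inl h
    · exact Or.inr ⟨k, hk, he.symm⟩
  · rintro (h | ⟨k, hk, he⟩)
    · exact Or.inl h
    · exact Or.inr ⟨k, hk, he.symm⟩

lemma mem_Af_iff {C : Finset ℕ} :
    C ∈ Af n P ↔ C = cf n P ∨
      (secondMin (block1 n P) < rS n P ∧ C = {secondMin (block1 n P)}) := by
  by_cases hsr : secondMin (block1 n P) < rS n P <;>
    simp [Af, hsr]

lemma Fwd.mem_parts_sig (hF : Fwd n P) {C : Finset ℕ} :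
    C ∈ (sig n P).parts ↔ (C ∈ P.parts ∧ C ∉ Df n P) ∨ C ∈ Af n P := by
  rw [hF.parts_sig, Finset.mem_union, Finset.mem_sdiff]

lemma Fwd.cf_notMem (hF : Fwd n P) : cf n P ∉ P.parts := by
  intro h
  have he := P.eq_of_mem_parts h hF.toBase.b1_mem hF.one_mem_cf hF.toBase.one_mem_b1
  have := (hF.toBase.sing_facts hF.X_sing).2.2.2
  exact this (he ▸ hF.X_mem_cf)

lemma Fwd.cf_mem_Af (hF : Fwd n P) : cf n P ∈ Af n P := mem_Af_iff.2 (Or.inl rfl)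

lemma Fwd.cf_mem_sig (hF : Fwd n P) : cf n P ∈ (sig n P).parts :=
  hF.mem_parts_sig.2 (Or.inr hF.cf_mem_Af)

lemma Fwd.block1_sig (hF : Fwd n P) : block1 n (sig n P) = cf n P :=
  block1_eq hF.cf_mem_sig hF.one_mem_cf

/-- kept singletons have value ≥ Y -/
lemma Fwd.kept_part_max (hF : Fwd n P) {C : Finset ℕ} (hC : C ∈ P.parts)
    (hCD : C ∉ Df n P) : Y n P ≤ blockMax C := by
  by_cases hc : 2 ≤ C.card
  · exact le_trans hF.toBase.Y_le_r (rS_le hC hc)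
  · have hc1 : C.card = 1 := by
      have := Finset.card_pos.2 (part_nonempty hC); omega
    have hCe := card_eq_one_iff_max (part_nonempty hC) hc1
    by_contra hlt
    push_neg at hlt
    refine hCD (mem_Df_iff.2 (Or.inr ⟨blockMax C, ?_, hCe⟩))
    rw [mem_Mf hF.toBase]
    exact ⟨hlt, hCe ▸ hC⟩

lemma Fwd.X_sig (hF : Fwd n P) : X n (sig n P) = Y n P := by
  have hYr := hF.toBase.Y_le_r
  have hYs := hF.toBase.Y_le_s
  refine X_eq ?_ ?_
  · by_cases hsr : secondMin (block1 n P) < rS n P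
    · refine ⟨{secondMin (block1 n P)}, hF.mem_parts_sig.2 (Or.inr ?_), ?_⟩
      · exact mem_Af_iff.2 (Or.inr ⟨hsr, rfl⟩)
      · rw [blockMax_singleton, hF.toBase.Y_eq]
        omega
    · push_neg at hsr
      have hYeq : Y n P = rS n P := by rw [hF.toBase.Y_eq]; omega
      obtain ⟨B, hBp, hc, he⟩ := hF.toBase.exists_r
      by_cases hb : B = block1 n P
      · refine ⟨cf n P, hF.cf_mem_sig, ?_⟩
        rw [hF.blockMax_cf, ← hb, he, hYeq]
      · refine ⟨B, hF.mem_parts_sig.2 (Or.inl ⟨hBp, ?_⟩), by rw [he, hYeq]⟩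
        rw [mem_Df_iff]
        rintro (h | ⟨k, hk, he2⟩)
        · exact hb h
        · rw [he2] at hc; simp at hc
  · intro C hC
    rcases hF.mem_parts_sig.1 hC with ⟨hCp, hCD⟩ | hCA
    · exact hF.kept_part_max hCp hCD
    · rcases mem_Af_iff.1 hCA with h | ⟨hsr, h⟩
      · rw [h, hF.blockMax_cf]
        exact le_trans hYr hF.toBase.r_le_max_b1
      · rw [h, blockMax_singleton]
        exact hYs

lemma Fwd.not1_sig (hF : Fwd n P) : ({1} : Finset ℕ) ∉ (sig n P).parts := by
  rw [hF.mem_parts_sig]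
  rintro (⟨h, -⟩ | h)
  · exact hF.toBase.not1 h
  · rcases mem_Af_iff.1 h with h | ⟨-, h⟩
    · have := hF.cf_card2
      rw [← h] at this
      simp at this
    · have := hF.toBase.two_le_s
      have : secondMin (block1 n P) ∈ ({1} : Finset ℕ) :=
        h ▸ Finset.mem_singleton_self _
      rw [Finset.mem_singleton] at this
      omega

lemma Fwd.secondMin_cf (hF : Fwd n P) : secondMin (cf n P) = X n P := by
  have hmin : blockMin (cf n P) = 1 := by
    refine fmin_eq hF.one_mem_cf ?_
    intro x hx
    rcases hF.mem_cf_elim hx with h | h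
    · exact (mem_bounds hF.toBase.b1_mem h).1
    · have := (Mf_facts hF.toBase h).1; omega
  rw [secondMin, hmin]
  refine fmin_eq (Finset.mem_erase.2 ⟨?_, hF.X_mem_cf⟩) ?_
  · have := (Mf_facts hF.toBase hF.X_mem_Mf).1; omega
  · intro x hx
    rw [Finset.mem_erase] at hx
    rcases hF.mem_cf_elim hx.2 with h | h
    · have := hF.toBase.s_le h hx.1
      have := hF.X_lt_s
      omega
    · exact ((hF.toBase.sing_facts (Mf_facts hF.toBase h).2.2.1)).2.2.1

lemma Fwd.bigNS_sig (hF : Fwd n P) :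
    (sig n P).parts.filter (fun B => 2 ≤ B.card) =
      insert (cf n P) ((P.parts.filter (fun B => 2 ≤ B.card)).erase (block1 n P)) := by
  ext C
  rw [Finset.mem_filter, hF.mem_parts_sig, Finset.mem_insert, Finset.mem_erase,
    Finset.mem_filter]
  constructor
  · rintro ⟨(⟨hCp, hCD⟩ | hCA), hc⟩
    · refine Or.inr ⟨?_, hCp, hc⟩
      intro h
      exact hCD (mem_Df_iff.2 (Or.inl h))
    · rcases mem_Af_iff.1 hCA with h | ⟨-, h⟩
      · exact Or.inl h
      · rw [h] at hc; simp at hc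
  · rintro (h | ⟨hne, hCp, hc⟩)
    · exact ⟨Or.inr (h ▸ hF.cf_mem_Af), h ▸ hF.cf_card2⟩
    · refine ⟨Or.inl ⟨hCp, ?_⟩, hc⟩
      rw [mem_Df_iff]
      rintro (h | ⟨k, hk, he⟩)
      · exact hne h
      · rw [he] at hc; simp at hc

lemma Fwd.rS_sig (hF : Fwd n P) : rS n (sig n P) = rS n P := by
  refine rS_eq ?_ ?_
  · obtain ⟨B, hBp, hc, he⟩ := hF.toBase.exists_r
    by_cases hb : B = block1 n P
    · refine ⟨cf n P, hF.cf_mem_sig, hF.cf_card2, ?_⟩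
      rw [hF.blockMax_cf, ← hb, he]
    · refine ⟨B, hF.mem_parts_sig.2 (Or.inl ⟨hBp, ?_⟩), hc, he⟩
      rw [mem_Df_iff]
      rintro (h | ⟨k, hk, he2⟩)
      · exact hb h
      · rw [he2] at hc; simp at hc
  · intro C hC hc
    rcases hF.mem_parts_sig.1 hC with ⟨hCp, -⟩ | hCA
    · exact rS_le hCp hc
    · rcases mem_Af_iff.1 hCA with h | ⟨-, h⟩
      · rw [h, hF.blockMax_cf]
        exact hF.toBase.r_le_max_b1
      · rw [h] at hc; simp at hc

lemma Fwd.Y_sig (hF : Fwd n P) : Y n (sig n P) = X n P := by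
  rw [Y_def' hF.not1_sig, hF.rS_sig, hF.block1_sig, hF.secondMin_cf]
  have := hF.X_le_r
  omega

end
end Stmt4

namespace Stmt4
section
variable {n : ℕ} {P : Finpartition (Finset.Icc 1 n)}

lemma Fwd.Mf_subset_cf (hF : Fwd n P) : Mf n P ⊆ cf n P := by
  intro x hx
  by_cases hsr : secondMin (block1 n P) < rS n P <;>
    simp [cf, hsr, Finset.mem_union, hx]

lemma Fwd.Y_lt_r_iff (hF : Fwd n P) :
    (Y n P < rS n P ↔ secondMin (block1 n P) < rS n P) := by
  rw [hF.toBase.Y_eq]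
  omega

lemma Fwd.Rb_sig (hF : Fwd n P) : Rb n (sig n P) = Mf n P := by
  rw [Rb, hF.block1_sig, hF.X_sig]
  ext x
  rw [Finset.mem_filter]
  constructor
  · rintro ⟨hx, h1, hY⟩
    rcases hF.mem_cf_elim hx with h | h
    · exfalso
      have := hF.toBase.s_le h (by omega)
      have := hF.toBase.Y_le_s
      omega
    · exact h
  · intro hx
    obtain ⟨h2, hY, -, -⟩ := Mf_facts hF.toBase hx
    exact ⟨hF.Mf_subset_cf hx, by omega, hY⟩

lemma b1_disj_Mf (hB : Base n P) : Disjoint (block1 n P) (Mf n P) := by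
  rw [Finset.disjoint_right]
  intro k hk
  exact (Mf_facts hB hk).2.2.2

lemma Fwd.cf_sdiff_Mf (hF : Fwd n P) :
    cf n P \ Mf n P = (if secondMin (block1 n P) < rS n P then
      (block1 n P).erase (secondMin (block1 n P)) else block1 n P) := by
  by_cases hsr : secondMin (block1 n P) < rS n P <;>
    simp only [cf, hsr, if_true, if_false]
  · exact Finset.union_sdiff_cancel_right
      ((b1_disj_Mf hF.toBase).mono_left (Finset.erase_subset _ _))
  · exact Finset.union_sdiff_cancel_right (b1_disj_Mf hF.toBase)

lemma Fwd.cb_sig (hF : Fwd n P) : cb n (sig n P) = block1 n P := by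
  rw [cb, hF.X_sig, hF.rS_sig, hF.block1_sig, hF.Rb_sig, hF.cf_sdiff_Mf]
  by_cases hsr : secondMin (block1 n P) < rS n P
  · rw [if_pos (hF.Y_lt_r_iff.2 hsr), if_pos hsr]
    have hYs : Y n P = secondMin (block1 n P) := by
      rw [hF.toBase.Y_eq]; omega
    rw [hYs, Finset.insert_erase hF.toBase.s_mem]
  · rw [if_neg (fun h => hsr (hF.Y_lt_r_iff.1 h)), if_neg hsr]

lemma Fwd.Db_sig (hF : Fwd n P) : Db n (sig n P) = Af n P := by
  rw [Db, hF.X_sig, hF.rS_sig, hF.block1_sig, Af]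
  by_cases hsr : secondMin (block1 n P) < rS n P
  · rw [if_pos (hF.Y_lt_r_iff.2 hsr), if_pos hsr]
    have hYs : Y n P = secondMin (block1 n P) := by
      rw [hF.toBase.Y_eq]; omega
    rw [hYs]
  · rw [if_neg (fun h => hsr (hF.Y_lt_r_iff.1 h)), if_neg hsr]

lemma Fwd.Ab_sig (hF : Fwd n P) : Ab n (sig n P) = Df n P := by
  rw [Ab, hF.cb_sig, hF.Rb_sig, Df]

lemma Fwd.Af_notMem_parts (hF : Fwd n P) {C : Finset ℕ} (hC : C ∈ Af n P) :
    C ∉ P.parts := by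
  rcases mem_Af_iff.1 hC with h | ⟨hsr, h⟩
  · exact h ▸ hF.cf_notMem
  · exact h ▸ mem_b1_not_sing hF.toBase hF.toBase.s_mem

lemma Fwd.valid_back (hF : Fwd n P) : Valid (sig n P) (Af n P) (Df n P) := by
  refine ⟨?_, ?_, ?_, ?_⟩
  · intro C hC
    rcases mem_Af_iff.1 hC with h | ⟨hsr, h⟩
    · exact h ▸ hF.cf_mem_sig
    · exact h ▸ hF.mem_parts_sig.2 (Or.inr (mem_Af_iff.2 (Or.inr ⟨hsr, rfl⟩)))
  · rw [hF.Af_sup, Df_sup hF.toBase]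
  · intro x hx y hy hxy
    simp only [Df, Finset.coe_insert, Set.mem_insert_iff, Finset.coe_image,
      Set.mem_image, Finset.mem_coe] at hx hy
    rcases hx with hx | ⟨k, hk, hke⟩ <;> rcases hy with hy | ⟨l, hl, hle⟩
    · exact absurd (hx.trans hy.symm) hxy
    · subst hx; rw [← hle]
      exact Finset.disjoint_singleton_right.2 (Mf_facts hF.toBase hl).2.2.2
    · subst hy; rw [← hke]
      exact Finset.disjoint_singleton_left.2 (Mf_facts hF.toBase hk).2.2.2
    · rw [← hke, ← hle]
      have hkl : k ≠ l := fun h => hxy (by rw [← hke, ← hle, h])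
      simpa [Function.onFun] using Finset.disjoint_singleton.2 hkl
  · intro h
    rcases mem_Df_iff.1 h with h | ⟨k, hk, he⟩
    · exact absurd (h ▸ hF.toBase.one_mem_b1 : (1:ℕ) ∈ (⊥ : Finset ℕ)) (by simp)
    · exact absurd (he ▸ Finset.mem_singleton_self k : k ∈ (⊥ : Finset ℕ)) (by simp)

lemma Fwd.sig_sig (hF : Fwd n P) : sig n (sig n P) = P := by
  have hXY : X n (sig n P) = Y n P := hF.X_sig
  have hYX : Y n (sig n P) = X n P := hF.Y_sig
  have hv : Valid (sig n P) (Db n (sig n P)) (Ab n (sig n P)) := by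
    rw [hF.Db_sig, hF.Ab_sig]; exact hF.valid_back
  have hparts : (sig n (sig n P)).parts = P.parts := by
    rw [sig, if_neg (by rw [hXY, hYX]; intro h; have := hF.hxy; omega),
      if_pos ⟨hF.hn, by rw [hXY, hYX]; exact hF.hxy⟩,
      replaceParts_parts hv, hF.Db_sig, hF.Ab_sig, hF.parts_sig]
    ext C
    simp only [Finset.mem_union, Finset.mem_sdiff]
    constructor
    · rintro (⟨(⟨hCp, -⟩ | hCA), hCnA⟩ | hCD)
      · exact hCp
      · exact absurd hCA hCnA
      · exact hF.valid.1 hCD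
    · intro hCp
      by_cases hCD : C ∈ Df n P
      · exact Or.inr hCD
      · refine Or.inl ⟨Or.inl ⟨hCp, hCD⟩, ?_⟩
        intro hCA
        exact hF.Af_notMem_parts hCA hCp
  ext1
  rw [hparts]

end
end Stmt4

namespace Stmt4
section
variable {n : ℕ} {P : Finpartition (Finset.Icc 1 n)}

lemma Bwd.s_lt_r (hW : Bwd n P) : secondMin (block1 n P) < rS n P := by
  have h1 := hW.toBase.Y_eq
  have h2 := hW.hyx
  have h3 := hW.toBase.X_le_r
  omega

lemma Bwd.Y_eq_s (hW : Bwd n P) : Y n P = secondMin (block1 n P) := by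
  have h1 := hW.toBase.Y_eq
  have h2 := hW.s_lt_r
  omega

lemma Bwd.s_lt_X (hW : Bwd n P) : secondMin (block1 n P) < X n P := by
  have := hW.Y_eq_s; have := hW.hyx; omega

lemma mem_Rb {x : ℕ} : x ∈ Rb n P ↔ x ∈ block1 n P ∧ 1 < x ∧ x < X n P := by
  rw [Rb, Finset.mem_filter]

lemma Bwd.s_mem_Rb (hW : Bwd n P) : secondMin (block1 n P) ∈ Rb n P :=
  mem_Rb.2 ⟨hW.toBase.s_mem, by have := hW.toBase.two_le_s; omega, hW.s_lt_X⟩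

lemma Bwd.max_not_Rb (hW : Bwd n P) : blockMax (block1 n P) ∉ Rb n P := by
  rw [mem_Rb]
  rintro ⟨-, -, h⟩
  have h1 := hW.toBase.X_le_r
  have h2 := hW.toBase.r_le_max_b1
  omega

lemma Bwd.max_mem_cb (hW : Bwd n P) : blockMax (block1 n P) ∈ cb n P := by
  have h : blockMax (block1 n P) ∈ block1 n P \ Rb n P :=
    Finset.mem_sdiff.2 ⟨blockMax_mem (part_nonempty hW.toBase.b1_mem), hW.max_not_Rb⟩
  by_cases hlt : X n P < rS n P <;> simp [cb, hlt, h]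

lemma Bwd.one_mem_cb (hW : Bwd n P) : (1:ℕ) ∈ cb n P := by
  have h : (1:ℕ) ∈ block1 n P \ Rb n P :=
    Finset.mem_sdiff.2 ⟨hW.toBase.one_mem_b1, by rw [mem_Rb]; omega⟩
  by_cases hlt : X n P < rS n P <;> simp [cb, hlt, h]

lemma Bwd.X_sing (hW : Bwd n P) (hlt : X n P < rS n P) :
    ({X n P} : Finset ℕ) ∈ P.parts := by
  obtain ⟨B, hBp, hBe⟩ := exists_X (P := P) ⟨_, hW.toBase.b1_mem⟩
  have hc : B.card = 1 := by
    by_contra hc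
    have h2 : 2 ≤ B.card := by
      have := Finset.card_pos.2 (part_nonempty hBp); omega
    have := rS_le hBp h2
    omega
  have := card_eq_one_iff_max (part_nonempty hBp) hc
  rw [this, hBe] at hBp
  exact hBp

lemma Bwd.X_eq_r (hW : Bwd n P) (hge : ¬X n P < rS n P) : X n P = rS n P := by
  have := hW.toBase.X_le_r; omega

lemma Bwd.X_notMem_b1 (hW : Bwd n P) (hlt : X n P < rS n P) :
    X n P ∉ block1 n P :=
  (hW.toBase.sing_facts (hW.X_sing hlt)).2.2.2

lemma Bwd.mem_cb_elim (hW : Bwd n P) {x : ℕ} (hx : x ∈ cb n P) :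
    x ∈ block1 n P ∨ x = X n P := by
  by_cases hlt : X n P < rS n P <;>
    simp only [cb, hlt, if_true, if_false, Finset.mem_insert, Finset.mem_sdiff] at hx <;>
    tauto

lemma Bwd.mem_cb_ge (hW : Bwd n P) {x : ℕ} (hx : x ∈ cb n P) (hx1 : x ≠ 1) :
    X n P ≤ x := by
  have h : ∀ y ∈ block1 n P \ Rb n P, y ≠ 1 → X n P ≤ y := by
    intro y hy hy1
    rw [Finset.mem_sdiff, mem_Rb] at hy
    have h1 := (mem_bounds hW.toBase.b1_mem hy.1).1
    have h2 := hy.2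
    push_neg at h2
    exact h2 hy.1 (by omega)
  by_cases hlt : X n P < rS n P <;>
    simp only [cb, hlt, if_true, if_false, Finset.mem_insert] at hx
  · rcases hx with hx | hx
    · omega
    · exact h x hx hx1
  · exact h x hx hx1

lemma Bwd.cb_card2 (hW : Bwd n P) : 2 ≤ (cb n P).card := by
  refine Finset.one_lt_card.2 ⟨1, hW.one_mem_cb, blockMax (block1 n P), hW.max_mem_cb, ?_⟩
  have := hW.toBase.two_le_max_b1
  omega

lemma Bwd.blockMax_cb (hW : Bwd n P) :
    blockMax (cb n P) = blockMax (block1 n P) := by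
  apply le_antisymm
  · apply Finset.sup_le
    intro x hx
    rcases hW.mem_cb_elim hx with h | h
    · exact le_blockMax h
    · have h1 := hW.toBase.X_le_r
      have h2 := hW.toBase.r_le_max_b1
      simp only [id]
      omega
  · exact le_blockMax hW.max_mem_cb

lemma Rb_subset (hB : Base n P) : Rb n P ⊆ block1 n P := fun x hx => (mem_Rb.1 hx).1

lemma mem_Db_iff {C : Finset ℕ} :
    C ∈ Db n P ↔ C = block1 n P ∨ (X n P < rS n P ∧ C = {X n P}) := by
  by_cases hlt : X n P < rS n P <;> simp [Db, hlt]

lemma mem_Ab_iff {C : Finset ℕ} :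
    C ∈ Ab n P ↔ C = cb n P ∨ ∃ k ∈ Rb n P, C = {k} := by
  simp only [Ab, Finset.mem_insert, Finset.mem_image]
  constructor
  · rintro (h | ⟨k, hk, he⟩)
    · exact Or.inl h
    · exact Or.inr ⟨k, hk, he.symm⟩
  · rintro (h | ⟨k, hk, he⟩)
    · exact Or.inl h
    · exact Or.inr ⟨k, hk, he.symm⟩

lemma Bwd.Db_sup (hW : Bwd n P) :
    (Db n P).sup id = (if X n P < rS n P then insert (X n P) (block1 n P)
      else block1 n P) := by
  by_cases hlt : X n P < rS n P <;> simp only [Db, hlt, if_true, if_false]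
  · rw [Finset.sup_insert, Finset.sup_singleton]
    ext x
    simp only [id_eq, Finset.sup_eq_union, Finset.mem_union, Finset.mem_singleton,
      Finset.mem_insert]
    tauto
  · rw [Finset.sup_singleton]; rfl

lemma Bwd.Ab_sup (hW : Bwd n P) :
    (Ab n P).sup id = (if X n P < rS n P then insert (X n P) (block1 n P)
      else block1 n P) := by
  rw [Ab, Finset.sup_insert, sup_image_single]
  by_cases hlt : X n P < rS n P <;>
    simp only [cb, hlt, if_true, if_false, id_eq, Finset.sup_eq_union]
  · ext x
    simp only [Finset.mem_union, Finset.mem_insert, Finset.mem_sdiff]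
    constructor
    · rintro ((h | h) | h)
      · exact Or.inl h
      · exact Or.inr h.1
      · exact Or.inr (Rb_subset hW.toBase h)
    · rintro (h | h)
      · exact Or.inl (Or.inl h)
      · by_cases hR : x ∈ Rb n P
        · exact Or.inr hR
        · exact Or.inl (Or.inr ⟨h, hR⟩)
  · ext x
    simp only [Finset.mem_union, Finset.mem_sdiff]
    constructor
    · rintro (h | h)
      · exact h.1
      · exact Rb_subset hW.toBase h
    · intro h
      by_cases hR : x ∈ Rb n P
      · exact Or.inr hR
      · exact Or.inl ⟨h, hR⟩

lemma Bwd.k_notMem_cb (hW : Bwd n P) {k : ℕ} (hk : k ∈ Rb n P) : k ∉ cb n P := by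
  rw [mem_Rb] at hk
  intro h
  have := hW.mem_cb_ge h (by omega)
  have := hk.2.2
  omega

lemma Bwd.valid (hW : Bwd n P) : Valid P (Db n P) (Ab n P) := by
  refine ⟨?_, ?_, ?_, ?_⟩
  · intro C hC
    rcases mem_Db_iff.1 hC with h | ⟨hlt, h⟩
    · exact h ▸ hW.toBase.b1_mem
    · exact h ▸ hW.X_sing hlt
  · rw [hW.Ab_sup, hW.Db_sup]
  · intro x hx y hy hxy
    simp only [Ab, Finset.coe_insert, Set.mem_insert_iff, Finset.coe_image,
      Set.mem_image, Finset.mem_coe] at hx hy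
    rcases hx with hx | ⟨k, hk, hke⟩ <;> rcases hy with hy | ⟨l, hl, hle⟩
    · exact absurd (hx.trans hy.symm) hxy
    · subst hx; rw [← hle]
      exact Finset.disjoint_singleton_right.2 (hW.k_notMem_cb hl)
    · subst hy; rw [← hke]
      exact Finset.disjoint_singleton_left.2 (hW.k_notMem_cb hk)
    · rw [← hke, ← hle]
      have hkl : k ≠ l := fun h => hxy (by rw [← hke, ← hle, h])
      simpa [Function.onFun] using Finset.disjoint_singleton.2 hkl
  · intro h
    rcases mem_Ab_iff.1 h with h | ⟨k, hk, he⟩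
    · exact absurd (h ▸ hW.one_mem_cb : (1:ℕ) ∈ (⊥ : Finset ℕ)) (by simp)
    · exact absurd (he ▸ Finset.mem_singleton_self k : k ∈ (⊥ : Finset ℕ)) (by simp)

lemma Bwd.parts_sig (hW : Bwd n P) :
    (sig n P).parts = (P.parts \ Db n P) ∪ Ab n P := by
  rw [sig, if_neg (by have := hW.hyx; omega), if_pos ⟨hW.hn, hW.hyx⟩,
    replaceParts_parts hW.valid]

lemma Bwd.mem_parts_sig (hW : Bwd n P) {C : Finset ℕ} :
    C ∈ (sig n P).parts ↔ (C ∈ P.parts ∧ C ∉ Db n P) ∨ C ∈ Ab n P := by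
  rw [hW.parts_sig, Finset.mem_union, Finset.mem_sdiff]

lemma Bwd.cb_notMem (hW : Bwd n P) : cb n P ∉ P.parts := by
  intro h
  have he := P.eq_of_mem_parts h hW.toBase.b1_mem hW.one_mem_cb hW.toBase.one_mem_b1
  exact hW.k_notMem_cb hW.s_mem_Rb (he ▸ hW.toBase.s_mem)

lemma Bwd.cb_mem_Ab (hW : Bwd n P) : cb n P ∈ Ab n P := mem_Ab_iff.2 (Or.inl rfl)

lemma Bwd.cb_mem_sig (hW : Bwd n P) : cb n P ∈ (sig n P).parts :=
  hW.mem_parts_sig.2 (Or.inr hW.cb_mem_Ab)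

lemma Bwd.block1_sig (hW : Bwd n P) : block1 n (sig n P) = cb n P :=
  block1_eq hW.cb_mem_sig hW.one_mem_cb

lemma Bwd.secondMin_cb_eq (hW : Bwd n P) (hlt : X n P < rS n P) :
    secondMin (cb n P) = X n P := by
  have hmin : blockMin (cb n P) = 1 := by
    refine fmin_eq hW.one_mem_cb ?_
    intro x hx
    rcases hW.mem_cb_elim hx with h | h
    · exact (mem_bounds hW.toBase.b1_mem h).1
    · have := hW.toBase.X_pos; omega
  rw [secondMin, hmin]
  refine fmin_eq (Finset.mem_erase.2 ⟨?_, ?_⟩) ?_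
  · have := hW.toBase.X_pos
    have := hW.s_lt_X
    have := hW.toBase.two_le_s
    omega
  · simp [cb, hlt]
  · intro x hx
    rw [Finset.mem_erase] at hx
    exact hW.mem_cb_ge hx.2 hx.1

lemma Bwd.secondMin_cb_ge (hW : Bwd n P) :
    X n P ≤ secondMin (cb n P) := by
  have hmin : blockMin (cb n P) = 1 := by
    refine fmin_eq hW.one_mem_cb ?_
    intro x hx
    rcases hW.mem_cb_elim hx with h | h
    · exact (mem_bounds hW.toBase.b1_mem h).1
    · have := hW.toBase.X_pos; omega
  rw [secondMin, hmin]
  have hne : ((cb n P).erase 1).Nonempty := by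
    refine ⟨blockMax (block1 n P), Finset.mem_erase.2 ⟨?_, hW.max_mem_cb⟩⟩
    have := hW.toBase.two_le_max_b1; omega
  have := fmin_mem hne
  rw [Finset.mem_erase] at this
  exact hW.mem_cb_ge this.2 this.1

lemma Bwd.bigNS_sig (hW : Bwd n P) :
    (sig n P).parts.filter (fun B => 2 ≤ B.card) =
      insert (cb n P) ((P.parts.filter (fun B => 2 ≤ B.card)).erase (block1 n P)) := by
  ext C
  rw [Finset.mem_filter, hW.mem_parts_sig, Finset.mem_insert, Finset.mem_erase,
    Finset.mem_filter]
  constructor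
  · rintro ⟨(⟨hCp, hCD⟩ | hCA), hc⟩
    · refine Or.inr ⟨fun h => hCD (mem_Db_iff.2 (Or.inl h)), hCp, hc⟩
    · rcases mem_Ab_iff.1 hCA with h | ⟨k, hk, h⟩
      · exact Or.inl h
      · rw [h] at hc; simp at hc
  · rintro (h | ⟨hne, hCp, hc⟩)
    · exact ⟨Or.inr (h ▸ hW.cb_mem_Ab), h ▸ hW.cb_card2⟩
    · refine ⟨Or.inl ⟨hCp, ?_⟩, hc⟩
      rw [mem_Db_iff]
      rintro (h | ⟨hlt, h⟩)
      · exact hne h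
      · rw [h] at hc; simp at hc

lemma Bwd.rS_sig (hW : Bwd n P) : rS n (sig n P) = rS n P := by
  refine rS_eq ?_ ?_
  · obtain ⟨B, hBp, hc, he⟩ := hW.toBase.exists_r
    by_cases hb : B = block1 n P
    · exact ⟨cb n P, hW.cb_mem_sig, hW.cb_card2, by rw [hW.blockMax_cb, ← hb, he]⟩
    · refine ⟨B, hW.mem_parts_sig.2 (Or.inl ⟨hBp, ?_⟩), hc, he⟩
      rw [mem_Db_iff]
      rintro (h | ⟨hlt, h⟩)
      · exact hb h
      · rw [h] at hc; simp at hc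
  · intro C hC hc
    rcases hW.mem_parts_sig.1 hC with ⟨hCp, -⟩ | hCA
    · exact rS_le hCp hc
    · rcases mem_Ab_iff.1 hCA with h | ⟨k, hk, h⟩
      · rw [h, hW.blockMax_cb]
        exact hW.toBase.r_le_max_b1
      · rw [h] at hc; simp at hc

lemma Bwd.X_sig (hW : Bwd n P) : X n (sig n P) = Y n P := by
  rw [hW.Y_eq_s]
  refine X_eq ?_ ?_
  · refine ⟨{secondMin (block1 n P)},
      hW.mem_parts_sig.2 (Or.inr (mem_Ab_iff.2 (Or.inr ⟨_, hW.s_mem_Rb, rfl⟩))), ?_⟩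
    rw [blockMax_singleton]
  · intro C hC
    have hsX := hW.s_lt_X
    have hsr := hW.s_lt_r
    rcases hW.mem_parts_sig.1 hC with ⟨hCp, hCD⟩ | hCA
    · by_cases hc : 2 ≤ C.card
      · have := rS_le hCp hc; omega
      · have hc1 : C.card = 1 := by
          have := Finset.card_pos.2 (part_nonempty hCp); omega
        have hCe := card_eq_one_iff_max (part_nonempty hCp) hc1
        have := X_le hCp
        omega
    · rcases mem_Ab_iff.1 hCA with h | ⟨k, hk, h⟩
      · rw [h, hW.blockMax_cb]
        have := hW.toBase.r_le_max_b1
        omega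
      · rw [h, blockMax_singleton]
        rw [mem_Rb] at hk
        exact hW.toBase.s_le hk.1 (by omega)

lemma Bwd.not1_sig (hW : Bwd n P) : ({1} : Finset ℕ) ∉ (sig n P).parts := by
  rw [hW.mem_parts_sig]
  rintro (⟨h, -⟩ | h)
  · exact hW.toBase.not1 h
  · rcases mem_Ab_iff.1 h with h | ⟨k, hk, h⟩
    · have := hW.cb_card2
      rw [← h] at this
      simp at this
    · rw [mem_Rb] at hk
      have : k ∈ ({1} : Finset ℕ) := h ▸ Finset.mem_singleton_self k
      rw [Finset.mem_singleton] at this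
      omega

lemma Bwd.Y_sig (hW : Bwd n P) : Y n (sig n P) = X n P := by
  rw [Y_def' hW.not1_sig, hW.rS_sig, hW.block1_sig]
  by_cases hlt : X n P < rS n P
  · rw [hW.secondMin_cb_eq hlt]
    omega
  · have h1 := hW.secondMin_cb_ge
    have h2 := hW.X_eq_r hlt
    omega

end
end Stmt4

namespace Stmt4
section
variable {n : ℕ} {P : Finpartition (Finset.Icc 1 n)}

lemma Bwd.base_sig (hW : Bwd n P) : Base n (sig n P) := ⟨hW.hn, hW.not1_sig⟩

lemma Bwd.Mf_sig (hW : Bwd n P) : Mf n (sig n P) = Rb n P := by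
  ext k
  rw [mem_Mf hW.base_sig, hW.Y_sig]
  constructor
  · rintro ⟨hkX, hkp⟩
    rcases hW.mem_parts_sig.1 hkp with ⟨hCp, -⟩ | hCA
    · have := (hW.toBase.sing_facts hCp).2.2.1
      omega
    · rcases mem_Ab_iff.1 hCA with h | ⟨l, hl, h⟩
      · exfalso
        have := hW.cb_card2
        rw [← h] at this
        simp at this
      · rwa [Finset.singleton_inj.1 h]
  · intro hk
    have hkX := (mem_Rb.1 hk).2.2
    exact ⟨hkX, hW.mem_parts_sig.2 (Or.inr (mem_Ab_iff.2 (Or.inr ⟨k, hk, rfl⟩)))⟩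

lemma Bwd.cf_sig (hW : Bwd n P) : cf n (sig n P) = block1 n P := by
  rw [cf, hW.block1_sig, hW.rS_sig, hW.Mf_sig]
  by_cases hlt : X n P < rS n P
  · rw [if_pos (by rw [hW.secondMin_cb_eq hlt]; exact hlt),
      hW.secondMin_cb_eq hlt]
    have hX : X n P ∉ block1 n P \ Rb n P := fun h =>
      hW.X_notMem_b1 hlt (Finset.mem_sdiff.1 h).1
    rw [cb, if_pos hlt, Finset.erase_insert hX,
      Finset.sdiff_union_of_subset (Rb_subset hW.toBase)]
  · rw [if_neg (by
      have h1 := hW.secondMin_cb_ge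
      have h2 := hW.X_eq_r hlt
      omega)]
    rw [cb, if_neg hlt, Finset.sdiff_union_of_subset (Rb_subset hW.toBase)]

lemma Bwd.Df_sig (hW : Bwd n P) : Df n (sig n P) = Ab n P := by
  rw [Df, hW.block1_sig, hW.Mf_sig, Ab]

lemma Bwd.Af_sig (hW : Bwd n P) : Af n (sig n P) = Db n P := by
  rw [Af, hW.block1_sig, hW.rS_sig, hW.cf_sig, Db]
  by_cases hlt : X n P < rS n P
  · rw [if_pos (by rw [hW.secondMin_cb_eq hlt]; exact hlt), if_pos hlt,
      hW.secondMin_cb_eq hlt]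
  · rw [if_neg (by
      have h1 := hW.secondMin_cb_ge
      have h2 := hW.X_eq_r hlt
      omega), if_neg hlt]

lemma Bwd.valid_back (hW : Bwd n P) : Valid (sig n P) (Ab n P) (Db n P) := by
  refine ⟨?_, ?_, ?_, ?_⟩
  · intro C hC
    rcases mem_Ab_iff.1 hC with h | ⟨k, hk, h⟩
    · exact h ▸ hW.cb_mem_sig
    · exact h ▸ hW.mem_parts_sig.2 (Or.inr (mem_Ab_iff.2 (Or.inr ⟨k, hk, rfl⟩)))
  · rw [hW.Ab_sup, hW.Db_sup]
  · intro x hx y hy hxy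
    by_cases hlt : X n P < rS n P <;>
      simp only [Db, hlt, if_true, if_false, Finset.coe_insert, Finset.coe_singleton,
        Set.mem_insert_iff, Set.mem_singleton_iff] at hx hy
    · have hd : Disjoint (block1 n P) ({X n P} : Finset ℕ) :=
        Finset.disjoint_singleton_right.2 (hW.X_notMem_b1 hlt)
      rcases hx with hx | hx <;> rcases hy with hy | hy <;>
        first
          | (exact absurd (hx.trans hy.symm) hxy)
          | (subst hx; subst hy; exact hd)
          | (subst hx; subst hy; exact hd.symm)
    · subst hx; subst hy; exact absurd rfl hxy
  · intro h
    rcases mem_Db_iff.1 h with h | ⟨hlt, h⟩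
    · exact absurd (h ▸ hW.toBase.one_mem_b1 : (1:ℕ) ∈ (⊥ : Finset ℕ)) (by simp)
    · exact absurd (h ▸ Finset.mem_singleton_self (X n P) :
        X n P ∈ (⊥ : Finset ℕ)) (by simp)

lemma Bwd.Ab_notMem_parts (hW : Bwd n P) {C : Finset ℕ} (hC : C ∈ Ab n P) :
    C ∉ P.parts := by
  rcases mem_Ab_iff.1 hC with h | ⟨k, hk, h⟩
  · exact h ▸ hW.cb_notMem
  · exact h ▸ mem_b1_not_sing hW.toBase (Rb_subset hW.toBase hk)

lemma Bwd.sig_sig (hW : Bwd n P) : sig n (sig n P) = P := by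
  have hXY : X n (sig n P) = Y n P := hW.X_sig
  have hYX : Y n (sig n P) = X n P := hW.Y_sig
  have hv : Valid (sig n P) (Df n (sig n P)) (Af n (sig n P)) := by
    rw [hW.Df_sig, hW.Af_sig]; exact hW.valid_back
  have hparts : (sig n (sig n P)).parts = P.parts := by
    rw [sig, if_pos ⟨hW.hn, by rw [hXY, hYX]; exact hW.hyx⟩,
      replaceParts_parts hv, hW.Df_sig, hW.Af_sig, hW.parts_sig]
    ext C
    simp only [Finset.mem_union, Finset.mem_sdiff]
    constructor
    · rintro (⟨(⟨hCp, -⟩ | hCA), hCnA⟩ | hCD)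
      · exact hCp
      · exact absurd hCA hCnA
      · exact hW.valid.1 hCD
    · intro hCp
      by_cases hCD : C ∈ Db n P
      · exact Or.inr hCD
      · refine Or.inl ⟨Or.inl ⟨hCp, hCD⟩, ?_⟩
        intro hCA
        exact hW.Ab_notMem_parts hCA hCp
  ext1
  rw [hparts]

end
end Stmt4

namespace Stmt4
section
variable {n : ℕ} {P : Finpartition (Finset.Icc 1 n)}

lemma span_transfer {Q : Finpartition (Finset.Icc 1 n)} {c : Finset ℕ}
    (hQ : Q.parts.filter (fun B => 2 ≤ B.card) =
      insert c ((P.parts.filter (fun B => 2 ≤ B.card)).erase (block1 n P)))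
    (hb : block1 n P ∈ P.parts.filter (fun B => 2 ≤ B.card))
    (hcn : c ∉ P.parts)
    (hspan : blockSpan c = blockSpan (block1 n P)) :
    (Q.parts.filter (fun B => 2 ≤ B.card)).val.map blockSpan =
      (P.parts.filter (fun B => 2 ≤ B.card)).val.map blockSpan := by
  rw [hQ]
  have hcne : c ∉ (P.parts.filter (fun B => 2 ≤ B.card)).erase (block1 n P) := by
    intro h
    exact hcn (Finset.mem_filter.1 (Finset.mem_of_mem_erase h)).1
  rw [Finset.insert_val_of_notMem hcne, Finset.erase_val, Multiset.map_cons, hspan]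
  have hbv : block1 n P ∈ (P.parts.filter (fun B => 2 ≤ B.card)).val := hb
  conv_rhs => rw [← Multiset.cons_erase hbv]
  rw [Multiset.map_cons]

lemma Fwd.blockSpan_cf (hF : Fwd n P) : blockSpan (cf n P) = blockSpan (block1 n P) := by
  have hmin : blockMin (cf n P) = 1 := by
    refine fmin_eq hF.one_mem_cf ?_
    intro x hx
    rcases hF.mem_cf_elim hx with h | h
    · exact (mem_bounds hF.toBase.b1_mem h).1
    · have := (Mf_facts hF.toBase h).1; omega
  rw [blockSpan, blockSpan, hmin, hF.blockMax_cf, hF.toBase.blockMin_b1]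

lemma Bwd.blockSpan_cb (hW : Bwd n P) : blockSpan (cb n P) = blockSpan (block1 n P) := by
  have hmin : blockMin (cb n P) = 1 := by
    refine fmin_eq hW.one_mem_cb ?_
    intro x hx
    rcases hW.mem_cb_elim hx with h | h
    · exact (mem_bounds hW.toBase.b1_mem h).1
    · have := hW.toBase.X_pos; omega
  rw [blockSpan, blockSpan, hmin, hW.blockMax_cb, hW.toBase.blockMin_b1]

lemma sig_eq_self (heq : X n P = Y n P) : sig n P = P := by
  rw [sig, if_neg (by omega), if_neg (by omega)]

lemma sig_spans (hn : 1 ≤ n) (P : Finpartition (Finset.Icc 1 n)) :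
    ((sig n P).parts.filter (fun B => 2 ≤ B.card)).val.map blockSpan =
      (P.parts.filter (fun B => 2 ≤ B.card)).val.map blockSpan := by
  rcases lt_trichotomy (X n P) (Y n P) with h | h | h
  · have hF : Fwd n P := ⟨base_of_ne hn (by omega), h⟩
    exact span_transfer hF.bigNS_sig
      (Finset.mem_filter.2 ⟨hF.toBase.b1_mem, hF.toBase.card2⟩)
      hF.cf_notMem hF.blockSpan_cf
  · rw [sig_eq_self h]
  · have hW : Bwd n P := ⟨base_of_ne hn (by omega), h⟩
    exact span_transfer hW.bigNS_sig
      (Finset.mem_filter.2 ⟨hW.toBase.b1_mem, hW.toBase.card2⟩)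
      hW.cb_notMem hW.blockSpan_cb

lemma sig_stats (hn : 1 ≤ n) (P : Finpartition (Finset.Icc 1 n)) :
    X n (sig n P) = Y n P ∧ Y n (sig n P) = X n P := by
  rcases lt_trichotomy (X n P) (Y n P) with h | h | h
  · have hF : Fwd n P := ⟨base_of_ne hn (by omega), h⟩
    exact ⟨hF.X_sig, hF.Y_sig⟩
  · rw [sig_eq_self h]
    exact ⟨h, h.symm⟩
  · have hW : Bwd n P := ⟨base_of_ne hn (by omega), h⟩
    exact ⟨hW.X_sig, hW.Y_sig⟩

lemma sig_invol (hn : 1 ≤ n) (P : Finpartition (Finset.Icc 1 n)) :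
    sig n (sig n P) = P := by
  rcases lt_trichotomy (X n P) (Y n P) with h | h | h
  · exact Fwd.sig_sig ⟨base_of_ne hn (by omega), h⟩
  · rw [sig_eq_self h, sig_eq_self h]
  · exact Bwd.sig_sig ⟨base_of_ne hn (by omega), h⟩

lemma span_singleton_cases (x : ℕ) (V : Finset ℕ) :
    Disjoint ({x} : Finset ℕ) V ∨ ({x} : Finset ℕ) ⊆ V := by
  by_cases h : x ∈ V
  · exact Or.inr (Finset.singleton_subset_iff.2 h)
  · exact Or.inl (Finset.disjoint_singleton_left.2 h)

lemma blockSpan_of_card_one {B : Finset ℕ} (hne : B.Nonempty) (h : B.card = 1) :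
    ∃ x, blockSpan B = {x} := by
  obtain ⟨a, ha⟩ := Finset.card_eq_one.1 h
  subst ha
  exact ⟨a, by rw [blockSpan, blockMax_singleton, blockMin_singleton, Finset.Icc_self]⟩

lemma sig_nonoverlap (hn : 1 ≤ n) (P : Finpartition (Finset.Icc 1 n))
    (hNO : Nonoverlapping n P) : Nonoverlapping n (sig n P) := by
  intro B1 hB1 B2 hB2
  have key : ∀ B ∈ (sig n P).parts, 2 ≤ B.card →
      ∃ C ∈ P.parts, 2 ≤ C.card ∧ blockSpan C = blockSpan B := by
    intro B hB hc
    have hmem : blockSpan B ∈ ((sig n P).parts.filter (fun B => 2 ≤ B.card)).val.map blockSpan :=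
      Multiset.mem_map_of_mem _ (Finset.mem_filter.2 ⟨hB, hc⟩)
    rw [sig_spans hn P] at hmem
    obtain ⟨C, hC, hCe⟩ := Multiset.mem_map.1 hmem
    have hC' : C ∈ P.parts.filter (fun B => 2 ≤ B.card) := hC
    rw [Finset.mem_filter] at hC'
    exact ⟨C, hC'.1, hC'.2, hCe⟩
  by_cases hc1 : 2 ≤ B1.card
  · by_cases hc2 : 2 ≤ B2.card
    · obtain ⟨C1, hC1, -, he1⟩ := key B1 hB1 hc1
      obtain ⟨C2, hC2, -, he2⟩ := key B2 hB2 hc2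
      have := hNO C1 hC1 C2 hC2
      rw [he1, he2] at this
      exact this
    · have hcard : B2.card = 1 := by
        have := Finset.card_pos.2 ((sig n P).nonempty_of_mem_parts hB2); omega
      obtain ⟨x, hx⟩ := blockSpan_of_card_one ((sig n P).nonempty_of_mem_parts hB2) hcard
      rw [hx]
      rcases span_singleton_cases x (blockSpan B1) with h | h
      · exact Or.inl h.symm
      · exact Or.inr (Or.inr h)
  · have hcard : B1.card = 1 := by
      have := Finset.card_pos.2 ((sig n P).nonempty_of_mem_parts hB1); omega
    obtain ⟨x, hx⟩ := blockSpan_of_card_one ((sig n P).nonempty_of_mem_parts hB1) hcard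
    rw [hx]
    rcases span_singleton_cases x (blockSpan B2) with h | h
    · exact Or.inl h
    · exact Or.inr (Or.inl h)

end
end Stmt4

/-- the involution σ preserves the multiset of spans of non-singleton
blocks, hence maps nonoverlapping partitions to nonoverlapping partitions, and X and Y
are equidistributed on nonoverlapping partitions of [n]. -/
theorem statement4 (n : ℕ) (hn : 1 ≤ n) :
    ∃ σ : Finpartition (Finset.Icc 1 n) → Finpartition (Finset.Icc 1 n),
      (∀ P, σ (σ P) = P) ∧
      (∀ P, X n (σ P) = Y n P ∧ Y n (σ P) = X n P) ∧
      (∀ P, ((σ P).parts.filter (fun B => 2 ≤ B.card)).val.map blockSpan =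
            (P.parts.filter (fun B => 2 ≤ B.card)).val.map blockSpan) ∧
      (∀ P, Nonoverlapping n P → Nonoverlapping n (σ P)) ∧
      (∀ k : ℕ,
        Nat.card {P : Finpartition (Finset.Icc 1 n) // Nonoverlapping n P ∧ X n P = k} =
        Nat.card {P : Finpartition (Finset.Icc 1 n) // Nonoverlapping n P ∧ Y n P = k}) := by
  refine ⟨Stmt4.sig n, fun P => Stmt4.sig_invol hn P, fun P => Stmt4.sig_stats hn P,
    fun P => Stmt4.sig_spans hn P, fun P => Stmt4.sig_nonoverlap hn P, ?_⟩
  intro k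
  refine Nat.card_congr
    ⟨fun P => ⟨Stmt4.sig n P.1, Stmt4.sig_nonoverlap hn P.1 P.2.1, by
        rw [(Stmt4.sig_stats hn P.1).2, P.2.2]⟩,
      fun Q => ⟨Stmt4.sig n Q.1, Stmt4.sig_nonoverlap hn Q.1 Q.2.1, by
        rw [(Stmt4.sig_stats hn Q.1).1, Q.2.2]⟩, ?_, ?_⟩
  · intro P
    exact Subtype.ext (Stmt4.sig_invol hn P.1)
  · intro Q
    exact Subtype.ext (Stmt4.sig_invol hn Q.1)
end

section
/- For all n ≥ 3, the map σ restricts to a bijection between {P a partition of [n] : X(P) < Y(P)} and {P a partition of [n] : X(P) > Y(P)}; in particular these two sets have the same cardinality. -/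
open Finset

namespace Stmt5

lemma min_getD_eq {u : Finset ℕ} {v d : ℕ} (hv : v ∈ u) (hlb : ∀ y ∈ u, v ≤ y) :
    u.min.getD d = v := by
  have hu : u.Nonempty := ⟨v, hv⟩
  have h1 : u.min' hu = v := le_antisymm (Finset.min'_le u v hv) (Finset.le_min' u hu v hlb)
  rw [← Finset.coe_min' hu, h1]
  rfl

lemma min_getD_mem {u : Finset ℕ} {d : ℕ} (hu : u.Nonempty) :
    u.min.getD d ∈ u ∧ ∀ y ∈ u, u.min.getD d ≤ y := by
  rw [← Finset.coe_min' hu]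
  exact ⟨Finset.min'_mem u hu, fun y hy => Finset.min'_le u y hy⟩

lemma le_blockMax {B : Finset ℕ} {x : ℕ} (hx : x ∈ B) : x ≤ blockMax B :=
  Finset.le_sup (f := id) hx

lemma blockMax_mem {B : Finset ℕ} (hB : B.Nonempty) : blockMax B ∈ B := by
  obtain ⟨b, hb, h⟩ := Finset.exists_mem_eq_sup B hB id
  rw [blockMax, h]; exact hb

lemma blockMax_singleton (x : ℕ) : blockMax {x} = x := Finset.sup_singleton

variable {n : ℕ} {P : Finpartition (Finset.Icc 1 n)}

/-- nonsingleton parts -/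
def nsParts (n : ℕ) (P : Finpartition (Finset.Icc 1 n)) : Finset (Finset ℕ) :=
  P.parts.filter (fun B => 2 ≤ B.card)

def rstat (n : ℕ) (P : Finpartition (Finset.Icc 1 n)) : ℕ :=
  (((nsParts n P).image blockMax).min).getD 0

def Sset (n : ℕ) (P : Finpartition (Finset.Icc 1 n)) : Finset ℕ :=
  (Finset.Icc 2 n).filter (fun x => ({x} : Finset ℕ) ∈ P.parts)

def sstat (n : ℕ) (P : Finpartition (Finset.Icc 1 n)) : ℕ := secondMin (block1 n P)

def tstat (n : ℕ) (P : Finpartition (Finset.Icc 1 n)) : ℕ := ((Sset n P).min).getD (n+1)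

def cstat (n : ℕ) (P : Finpartition (Finset.Icc 1 n)) : ℕ :=
  min (rstat n P) (max (sstat n P) (tstat n P) + 1)

def Aset (n : ℕ) (P : Finpartition (Finset.Icc 1 n)) : Finset ℕ := (block1 n P).erase 1

def oParts (n : ℕ) (P : Finpartition (Finset.Icc 1 n)) : Finset (Finset ℕ) :=
  (nsParts n P).erase (block1 n P)

def newA (n : ℕ) (P : Finpartition (Finset.Icc 1 n)) : Finset ℕ :=
  (Aset n P \ Finset.Ico 2 (cstat n P)) ∪ (Sset n P ∩ Finset.Ico 2 (cstat n P))

def newS (n : ℕ) (P : Finpartition (Finset.Icc 1 n)) : Finset ℕ :=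
  (Sset n P \ Finset.Ico 2 (cstat n P)) ∪ (Aset n P ∩ Finset.Ico 2 (cstat n P))

def newParts (n : ℕ) (P : Finpartition (Finset.Icc 1 n)) : Finset (Finset ℕ) :=
  insert (insert 1 (newA n P)) (oParts n P ∪ (newS n P).image (fun x => ({x} : Finset ℕ)))

lemma mem_ground {B : Finset ℕ} (hB : B ∈ P.parts) {x : ℕ} (hx : x ∈ B) :
    1 ≤ x ∧ x ≤ n := by
  have := (P.le hB : B ⊆ Finset.Icc 1 n) hx
  rwa [mem_Icc] at this

lemma block1_eq {B : Finset ℕ} (hB : B ∈ P.parts) (h1B : (1:ℕ) ∈ B) : block1 n P = B := by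
  unfold block1
  apply le_antisymm
  · apply Finset.sup_le
    intro C hC
    by_cases h : (1:ℕ) ∈ C
    · rw [if_pos h, P.eq_of_mem_parts hC hB h h1B]
    · rw [if_neg h]
      exact bot_le
  · have := Finset.le_sup (f := fun C => if (1:ℕ) ∈ C then C else ∅) hB
    simpa only [if_pos h1B] using this

lemma block1_mem (hn : 1 ≤ n) : block1 n P ∈ P.parts ∧ (1:ℕ) ∈ block1 n P := by
  obtain ⟨B, hB, h1B⟩ := P.exists_mem (mem_Icc.mpr ⟨le_refl 1, hn⟩)
  rw [block1_eq hB h1B]; exact ⟨hB, h1B⟩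

lemma block1_card (hn : 1 ≤ n) (h1 : ({1} : Finset ℕ) ∉ P.parts) :
    2 ≤ (block1 n P).card := by
  obtain ⟨hB, h1B⟩ := block1_mem (P := P) hn
  by_contra h
  have hne : (block1 n P).Nonempty := ⟨1, h1B⟩
  have hc1 : (block1 n P).card = 1 := by
    have := Finset.card_pos.mpr hne; omega
  obtain ⟨x, hx⟩ := Finset.card_eq_one.mp hc1
  rw [hx] at h1B hB
  rw [Finset.mem_singleton] at h1B
  rw [← h1B] at hB
  exact h1 hB

lemma Aset_nonempty (hn : 1 ≤ n) (h1 : ({1} : Finset ℕ) ∉ P.parts) :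
    (Aset n P).Nonempty := by
  have hc := block1_card hn h1
  have h1B := (block1_mem (P := P) hn).2
  rw [← Finset.card_pos, Aset, Finset.card_erase_of_mem h1B]
  omega

lemma Aset_sub (hn : 1 ≤ n) : Aset n P ⊆ Finset.Icc 2 n := by
  intro x hx
  rw [Aset, Finset.mem_erase] at hx
  have := mem_ground (block1_mem (P := P) hn).1 hx.2
  rw [mem_Icc]
  omega

lemma Sset_sub : Sset n P ⊆ Finset.Icc 2 n := Finset.filter_subset _ _

lemma Aset_Sset_disjoint (hn : 1 ≤ n) : Disjoint (Aset n P) (Sset n P) := by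
  rw [Finset.disjoint_left]
  intro x hxA hxS
  rw [Sset, Finset.mem_filter, mem_Icc] at hxS
  rw [Aset, Finset.mem_erase] at hxA
  have hB1 := (block1_mem (P := P) hn).1
  have := P.eq_of_mem_parts hB1 hxS.2 hxA.2 (Finset.mem_singleton_self x)
  have h1 := (block1_mem (P := P) hn).2
  rw [this, Finset.mem_singleton] at h1
  omega

lemma parts_decomp (hn : 1 ≤ n) (h1 : ({1} : Finset ℕ) ∉ P.parts) :
    P.parts = nsParts n P ∪ (Sset n P).image (fun x => ({x} : Finset ℕ)) := by
  ext B
  simp only [mem_union, nsParts, mem_filter, mem_image, Sset, mem_Icc]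
  constructor
  · intro hB
    by_cases hc : 2 ≤ B.card
    · exact Or.inl ⟨hB, hc⟩
    · right
      have hBne := P.nonempty_of_mem_parts hB
      have hc1 : B.card = 1 := by
        have := Finset.card_pos.mpr hBne; omega
      obtain ⟨x, hx⟩ := Finset.card_eq_one.mp hc1
      subst hx
      have hxg := mem_ground hB (Finset.mem_singleton_self x)
      have hx1 : x ≠ 1 := by rintro rfl; exact h1 hB
      exact ⟨x, ⟨⟨by omega, hxg.2⟩, hB⟩, rfl⟩
  · rintro (⟨hB, _⟩ | ⟨x, ⟨_, hx⟩, rfl⟩)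
    · exact hB
    · exact hx

lemma block1_mem_nsParts (hn : 1 ≤ n) (h1 : ({1} : Finset ℕ) ∉ P.parts) :
    block1 n P ∈ nsParts n P :=
  Finset.mem_filter.mpr ⟨(block1_mem hn).1, block1_card hn h1⟩

lemma nsParts_decomp (hn : 1 ≤ n) (h1 : ({1} : Finset ℕ) ∉ P.parts) :
    nsParts n P = insert (block1 n P) (oParts n P) :=
  (Finset.insert_erase (block1_mem_nsParts hn h1)).symm

lemma parts_decomp' (hn : 1 ≤ n) (h1 : ({1} : Finset ℕ) ∉ P.parts) :
    P.parts = insert (block1 n P)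
      (oParts n P ∪ (Sset n P).image (fun x => ({x} : Finset ℕ))) := by
  rw [parts_decomp hn h1, nsParts_decomp hn h1, Finset.insert_union]

lemma rstat_spec (hn : 1 ≤ n) (h1 : ({1} : Finset ℕ) ∉ P.parts) :
    (∃ B ∈ nsParts n P, blockMax B = rstat n P) ∧
      ∀ B ∈ nsParts n P, rstat n P ≤ blockMax B := by
  have hne : ((nsParts n P).image blockMax).Nonempty :=
    ⟨blockMax (block1 n P), Finset.mem_image_of_mem _ (block1_mem_nsParts hn h1)⟩
  obtain ⟨hmem, hlb⟩ := min_getD_mem (d := 0) hne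
  rw [Finset.mem_image] at hmem
  obtain ⟨B, hB, hBe⟩ := hmem
  exact ⟨⟨B, hB, hBe⟩, fun C hC => hlb _ (Finset.mem_image_of_mem _ hC)⟩

lemma rstat_bounds (hn : 1 ≤ n) (h1 : ({1} : Finset ℕ) ∉ P.parts) :
    2 ≤ rstat n P ∧ rstat n P ≤ n := by
  obtain ⟨⟨B, hB, hBe⟩, _⟩ := rstat_spec hn h1
  rw [nsParts, Finset.mem_filter] at hB
  have hBne : B.Nonempty := P.nonempty_of_mem_parts hB.1
  have hmax := mem_ground hB.1 (blockMax_mem hBne)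
  constructor
  · obtain ⟨a, ha, b, hb, hab⟩ := Finset.one_lt_card.mp hB.2
    have hag := mem_ground hB.1 ha
    have hbg := mem_ground hB.1 hb
    have h1 := le_blockMax ha
    have h2 := le_blockMax hb
    omega
  · omega

lemma blockMin_block1 (hn : 1 ≤ n) : blockMin (block1 n P) = 1 := by
  obtain ⟨hB, h1B⟩ := block1_mem (P := P) hn
  exact min_getD_eq h1B (fun y hy => (mem_ground hB hy).1)

lemma sstat_spec (hn : 1 ≤ n) (h1 : ({1} : Finset ℕ) ∉ P.parts) :
    sstat n P ∈ Aset n P ∧ ∀ x ∈ Aset n P, sstat n P ≤ x := by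
  have : sstat n P = ((Aset n P).min).getD 0 := by
    rw [sstat, secondMin, blockMin_block1 hn]; rfl
  rw [this]
  exact min_getD_mem (Aset_nonempty hn h1)

lemma tstat_spec :
    (Sset n P = ∅ ∧ tstat n P = n + 1) ∨
      (tstat n P ∈ Sset n P ∧ ∀ x ∈ Sset n P, tstat n P ≤ x) := by
  rcases Finset.eq_empty_or_nonempty (Sset n P) with h | h
  · left
    refine ⟨h, ?_⟩
    rw [tstat, h]
    rfl
  · right
    exact min_getD_mem h

lemma sstat_bounds (hn : 1 ≤ n) (h1 : ({1} : Finset ℕ) ∉ P.parts) :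
    2 ≤ sstat n P ∧ sstat n P ≤ n := by
  have := Aset_sub hn ((sstat_spec hn h1).1)
  rwa [mem_Icc] at this

lemma cstat_le_rstat : cstat n P ≤ rstat n P := min_le_left _ _

lemma cstat_bounds (hn : 1 ≤ n) (h1 : ({1} : Finset ℕ) ∉ P.parts) :
    2 ≤ cstat n P ∧ cstat n P ≤ n := by
  have hr := rstat_bounds hn h1
  have hs := sstat_bounds hn h1
  rw [cstat]
  omega

lemma blockMax_block1_mem (hn : 1 ≤ n) (h1 : ({1} : Finset ℕ) ∉ P.parts) :
    blockMax (block1 n P) ∈ Aset n P ∧ rstat n P ≤ blockMax (block1 n P) := by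
  have hBne : (block1 n P).Nonempty := ⟨1, (block1_mem hn).2⟩
  have hr := (rstat_spec hn h1).2 _ (block1_mem_nsParts hn h1)
  have hrb := rstat_bounds hn h1
  refine ⟨Finset.mem_erase.mpr ⟨by omega, blockMax_mem hBne⟩, hr⟩

/-- X as a min formula. -/
lemma Xval (hn : 1 ≤ n) (h1 : ({1} : Finset ℕ) ∉ P.parts) :
    X n P = min (rstat n P) (tstat n P) := by
  have hdec := parts_decomp hn h1
  have himg : P.parts.image blockMax =
      (nsParts n P).image blockMax ∪ Sset n P := by
    rw [hdec, Finset.image_union, Finset.image_image]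
    congr 1
    have : (fun x => blockMax {x}) = (fun x : ℕ => x) := by
      funext x; exact blockMax_singleton x
    rw [Function.comp_def]
    simp only [blockMax_singleton]
    exact Finset.image_id
  rw [X, himg]
  have hr := rstat_spec hn h1
  have hrb := rstat_bounds hn h1
  rcases le_or_gt (rstat n P) (tstat n P) with hle | hlt
  · rw [min_eq_left hle]
    obtain ⟨B, hB, hBe⟩ := hr.1
    apply min_getD_eq (Finset.mem_union_left _ (hBe ▸ Finset.mem_image_of_mem _ hB))
    intro y hy
    rcases Finset.mem_union.mp hy with hy | hy
    · obtain ⟨C, hC, hCe⟩ := Finset.mem_image.mp hy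
      exact hCe ▸ hr.2 C hC
    · rcases tstat_spec (P := P) with ⟨he, _⟩ | ⟨_, hl⟩
      · rw [he] at hy; exact absurd hy (Finset.notMem_empty y)
      · exact le_trans hle (hl y hy)
  · rw [min_eq_right hlt.le]
    rcases tstat_spec (P := P) with ⟨_, he⟩ | ⟨hm, hl⟩
    · omega
    · apply min_getD_eq (Finset.mem_union_right _ hm)
      intro y hy
      rcases Finset.mem_union.mp hy with hy | hy
      · obtain ⟨C, hC, hCe⟩ := Finset.mem_image.mp hy
        have := hr.2 C hC
        omega
      · exact hl y hy

lemma Yval (h1 : ({1} : Finset ℕ) ∉ P.parts) :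
    Y n P = min (rstat n P) (sstat n P) := by
  rw [Y, if_neg h1]; rfl

lemma X_one (hn : 1 ≤ n) (h1 : ({1} : Finset ℕ) ∈ P.parts) : X n P = 1 := by
  rw [X]
  apply min_getD_eq (u := P.parts.image blockMax) (v := 1)
  · exact Finset.mem_image.mpr ⟨{1}, h1, blockMax_singleton 1⟩
  · intro y hy
    obtain ⟨C, hC, hCe⟩ := Finset.mem_image.mp hy
    have hCne := P.nonempty_of_mem_parts hC
    have := mem_ground hC (blockMax_mem hCne)
    omega

lemma mem_newA (hn : 1 ≤ n) {x : ℕ} :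
    x ∈ newA n P ↔ (x ∈ Aset n P ∧ cstat n P ≤ x) ∨ (x ∈ Sset n P ∧ x < cstat n P) := by
  rw [newA, Finset.mem_union, Finset.mem_sdiff, Finset.mem_inter, Finset.mem_Ico]
  constructor
  · rintro (⟨hA, hI⟩ | ⟨hS, hI⟩)
    · left
      have := Aset_sub hn hA
      rw [mem_Icc] at this
      exact ⟨hA, by omega⟩
    · exact Or.inr ⟨hS, hI.2⟩
  · rintro (⟨hA, hc⟩ | ⟨hS, hc⟩)
    · exact Or.inl ⟨hA, by omega⟩
    · have := Sset_sub (P := P) hS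
      rw [mem_Icc] at this
      exact Or.inr ⟨hS, by omega⟩

lemma mem_newS (hn : 1 ≤ n) {x : ℕ} :
    x ∈ newS n P ↔ (x ∈ Sset n P ∧ cstat n P ≤ x) ∨ (x ∈ Aset n P ∧ x < cstat n P) := by
  rw [newS, Finset.mem_union, Finset.mem_sdiff, Finset.mem_inter, Finset.mem_Ico]
  constructor
  · rintro (⟨hS, hI⟩ | ⟨hA, hI⟩)
    · left
      have := Sset_sub (P := P) hS
      rw [mem_Icc] at this
      exact ⟨hS, by omega⟩
    · exact Or.inr ⟨hA, hI.2⟩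
  · rintro (⟨hS, hc⟩ | ⟨hA, hc⟩)
    · exact Or.inl ⟨hS, by omega⟩
    · have := Aset_sub hn hA
      rw [mem_Icc] at this
      exact Or.inr ⟨hA, by omega⟩

lemma newA_sub (hn : 1 ≤ n) : newA n P ⊆ Finset.Icc 2 n := by
  intro x hx
  rcases (mem_newA hn).mp hx with ⟨h, _⟩ | ⟨h, _⟩
  · exact Aset_sub hn h
  · exact Sset_sub h

lemma newS_sub (hn : 1 ≤ n) : newS n P ⊆ Finset.Icc 2 n := by
  intro x hx
  rcases (mem_newS hn).mp hx with ⟨h, _⟩ | ⟨h, _⟩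
  · exact Sset_sub h
  · exact Aset_sub hn h

lemma newA_newS_disjoint (hn : 1 ≤ n) : Disjoint (newA n P) (newS n P) := by
  rw [Finset.disjoint_left]
  intro x hxA hxS
  rcases (mem_newA hn).mp hxA with ⟨h, hc⟩ | ⟨h, hc⟩ <;>
    rcases (mem_newS hn).mp hxS with ⟨h', hc'⟩ | ⟨h', hc'⟩
  · exact (Finset.disjoint_left.mp (Aset_Sset_disjoint hn) h) h'
  · omega
  · omega
  · exact (Finset.disjoint_left.mp (Aset_Sset_disjoint hn) h') h

lemma newA_union_newS (hn : 1 ≤ n) : newA n P ∪ newS n P = Aset n P ∪ Sset n P := by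
  ext x
  rw [Finset.mem_union, Finset.mem_union, mem_newA hn, mem_newS hn]
  rcases le_or_gt (cstat n P) x with h | h <;> constructor <;> intro hh <;> tauto

lemma one_not_mem_newA (hn : 1 ≤ n) : (1:ℕ) ∉ newA n P := by
  intro h
  have := newA_sub hn h
  rw [mem_Icc] at this
  omega

lemma blockMax_mem_newA (hn : 1 ≤ n) (h1 : ({1} : Finset ℕ) ∉ P.parts) :
    blockMax (block1 n P) ∈ newA n P := by
  obtain ⟨hmem, hr⟩ := blockMax_block1_mem hn h1
  rw [mem_newA hn]
  exact Or.inl ⟨hmem, le_trans cstat_le_rstat hr⟩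

lemma blockMax_newB1 (hn : 1 ≤ n) (h1 : ({1} : Finset ℕ) ∉ P.parts) :
    blockMax (insert 1 (newA n P)) = blockMax (block1 n P) := by
  apply le_antisymm
  · apply Finset.sup_le
    intro x hx
    rcases Finset.mem_insert.mp hx with rfl | hx
    · have := (block1_mem (P := P) hn).2
      exact le_blockMax this
    · rcases (mem_newA hn).mp hx with ⟨h, _⟩ | ⟨_, hc⟩
      · exact le_blockMax (Finset.mem_erase.mp h).2
      · have hr := (blockMax_block1_mem hn h1).2
        have hcr := cstat_le_rstat (n := n) (P := P)
        simp only [id_eq]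
        omega
  · exact le_blockMax (Finset.mem_insert_of_mem (blockMax_mem_newA hn h1))

lemma newB1_card (hn : 1 ≤ n) (h1 : ({1} : Finset ℕ) ∉ P.parts) :
    2 ≤ (insert 1 (newA n P)).card := by
  rw [show (2:ℕ) ≤ (insert 1 (newA n P)).card ↔ 1 < (insert 1 (newA n P)).card from Iff.rfl,
    Finset.one_lt_card]
  refine ⟨1, Finset.mem_insert_self _ _, blockMax (block1 n P),
    Finset.mem_insert_of_mem (blockMax_mem_newA hn h1), ?_⟩
  have := newA_sub hn (blockMax_mem_newA hn h1)
  rw [mem_Icc] at this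
  omega

lemma mem_oParts {B : Finset ℕ} (hB : B ∈ oParts n P) :
    B ∈ P.parts ∧ 2 ≤ B.card ∧ B ≠ block1 n P := by
  rw [oParts, Finset.mem_erase, nsParts, Finset.mem_filter] at hB
  exact ⟨hB.2.1, hB.2.2, hB.1⟩

lemma oParts_elem (hn : 1 ≤ n) {B : Finset ℕ} (hB : B ∈ oParts n P) {x : ℕ}
    (hx : x ∈ B) : x ∉ block1 n P ∧ x ∉ Sset n P := by
  obtain ⟨hBp, hBc, hBne⟩ := mem_oParts hB
  constructor
  · intro hxB1
    exact hBne (P.eq_of_mem_parts hBp (block1_mem hn).1 hx hxB1)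
  · intro hxS
    rw [Sset, Finset.mem_filter] at hxS
    have := P.eq_of_mem_parts hBp hxS.2 hx (Finset.mem_singleton_self x)
    rw [this, Finset.card_singleton] at hBc
    omega

lemma mem_newParts {D : Finset ℕ} :
    D ∈ newParts n P ↔
      D = insert 1 (newA n P) ∨ D ∈ oParts n P ∨ ∃ x ∈ newS n P, D = {x} := by
  rw [newParts, Finset.mem_insert, Finset.mem_union, Finset.mem_image]
  constructor
  · rintro (h | h | ⟨x, hx, rfl⟩)
    · exact Or.inl h
    · exact Or.inr (Or.inl h)
    · exact Or.inr (Or.inr ⟨x, hx, rfl⟩)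
  · rintro (h | h | ⟨x, hx, rfl⟩)
    · exact Or.inl h
    · exact Or.inr (Or.inl h)
    · exact Or.inr (Or.inr ⟨x, hx, rfl⟩)

lemma sup_image_singleton (T : Finset ℕ) :
    (T.image fun x => ({x} : Finset ℕ)).sup id = T := by
  rw [Finset.sup_image]
  exact Finset.sup_singleton_eq_self T

lemma block1_eq_insert (hn : 1 ≤ n) : block1 n P = insert 1 (Aset n P) :=
  (Finset.insert_erase (block1_mem (P := P) hn).2).symm

/-- The involution. -/
def sig (n : ℕ) (P : Finpartition (Finset.Icc 1 n)) : Finpartition (Finset.Icc 1 n) :=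
  if h : ({1} : Finset ℕ) ∈ P.parts ∨ n < 3 then P else
  { parts := newParts n P
    supIndep := by
      have h1 : ({1} : Finset ℕ) ∉ P.parts := fun hh => h (Or.inl hh)
      have hn : 1 ≤ n := by
        rcases Nat.lt_or_ge n 3 with hh | hh
        · exact absurd (Or.inr hh) h
        · omega
      rw [Finset.supIndep_iff_pairwiseDisjoint]
      have hd2 : ∀ C ∈ oParts n P, Disjoint (insert 1 (newA n P)) C := by
        intro C hC
        rw [Finset.disjoint_left]
        intro a ha haC
        have hfacts := oParts_elem hn hC haC
        rcases Finset.mem_insert.mp ha with rfl | ha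
        · exact hfacts.1 (block1_mem hn).2
        · rcases (mem_newA hn).mp ha with ⟨hh, _⟩ | ⟨hh, _⟩
          · exact hfacts.1 (Finset.mem_erase.mp hh).2
          · exact hfacts.2 hh
      have hd3 : ∀ x ∈ newS n P, Disjoint (insert 1 (newA n P)) ({x} : Finset ℕ) := by
        intro x hx
        rw [Finset.disjoint_singleton_right, Finset.mem_insert]
        rintro (rfl | hh)
        · have := newS_sub hn hx
          rw [mem_Icc] at this
          omega
        · exact Finset.disjoint_left.mp (newA_newS_disjoint hn) hh hx
      have hd6 : ∀ C ∈ oParts n P, ∀ x ∈ newS n P, Disjoint C ({x} : Finset ℕ) := by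
        intro C hC x hx
        rw [Finset.disjoint_singleton_right]
        intro hxC
        have hfacts := oParts_elem hn hC hxC
        rcases (mem_newS hn).mp hx with ⟨hh, _⟩ | ⟨hh, _⟩
        · exact hfacts.2 hh
        · exact hfacts.1 (Finset.mem_erase.mp hh).2
      intro B hB C hC hne
      rw [Finset.mem_coe, mem_newParts] at hB hC
      simp only [id_eq, Function.onFun]
      rcases hB with rfl | hB | ⟨x, hx, rfl⟩ <;> rcases hC with rfl | hC | ⟨y, hy, rfl⟩
      · exact absurd rfl hne
      · exact hd2 _ hC
      · exact hd3 _ hy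
      · exact (hd2 _ hB).symm
      · exact P.disjoint (mem_oParts hB).1 (mem_oParts hC).1
          (fun hh => hne (by rw [hh]))
      · exact hd6 _ hB _ hy
      · exact (hd3 _ hx).symm
      · exact (hd6 _ hC _ hx).symm
      · rw [Finset.disjoint_singleton]
        intro hh
        exact hne (by rw [hh])
    sup_parts := by
      have h1 : ({1} : Finset ℕ) ∉ P.parts := fun hh => h (Or.inl hh)
      have hn : 1 ≤ n := by
        rcases Nat.lt_or_ge n 3 with hh | hh
        · exact absurd (Or.inr hh) h
        · omega
      have hsup : P.parts.sup id = Finset.Icc 1 n := P.sup_parts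
      rw [parts_decomp' hn h1, Finset.sup_insert, Finset.sup_union,
        sup_image_singleton] at hsup
      rw [newParts, Finset.sup_insert, Finset.sup_union, sup_image_singleton]
      rw [← hsup]
      have key : ∀ a : ℕ, a ∈ insert 1 (newA n P) ∨ a ∈ newS n P ↔
          a ∈ block1 n P ∨ a ∈ Sset n P := by
        intro a
        have h3 := Finset.ext_iff.mp (newA_union_newS (P := P) hn) a
        simp only [Finset.mem_union] at h3
        rw [Finset.mem_insert, block1_eq_insert hn, Finset.mem_insert]
        rw [Aset] at h3 ⊢
        tauto
      ext a
      simp only [Finset.sup_eq_union, Finset.mem_union, id_eq]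
      have := key a
      tauto
    bot_notMem := by
      intro hbot
      rcases mem_newParts.mp hbot with hh | hh | ⟨x, _, hh⟩
      · exact (Finset.insert_ne_empty _ _) hh.symm
      · exact absurd (P.nonempty_of_mem_parts (mem_oParts hh).1) (by simp)
      · exact (Finset.singleton_ne_empty x) hh.symm }

section QData

variable (hn : 3 ≤ n) (h1 : ({1} : Finset ℕ) ∉ P.parts)
include hn h1

lemma sig_parts : (sig n P).parts = newParts n P := by
  rw [sig, dif_neg]
  push_neg
  exact ⟨h1, by omega⟩

lemma one_not_mem_sig : ({1} : Finset ℕ) ∉ (sig n P).parts := by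
  have hn1 : 1 ≤ n := by omega
  rw [sig_parts hn h1]
  intro hmem
  rcases mem_newParts.mp hmem with hh | hh | ⟨x, hx, hh⟩
  · have hm := blockMax_mem_newA hn1 h1
    have hb := newA_sub hn1 hm
    rw [mem_Icc] at hb
    have : blockMax (block1 n P) ∈ ({1} : Finset ℕ) := by
      rw [hh]
      exact Finset.mem_insert_of_mem hm
    rw [Finset.mem_singleton] at this
    omega
  · have := (mem_oParts hh).2.1
    simp at this
  · have hb := newS_sub hn1 hx
    rw [mem_Icc] at hb
    rw [Finset.singleton_inj] at hh
    omega

lemma newB1_mem_sig : insert 1 (newA n P) ∈ (sig n P).parts := by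
  rw [sig_parts hn h1, newParts]
  exact Finset.mem_insert_self _ _

lemma block1_sig : block1 n (sig n P) = insert 1 (newA n P) :=
  block1_eq (newB1_mem_sig hn h1) (Finset.mem_insert_self _ _)

lemma Aset_sig : Aset n (sig n P) = newA n P := by
  have hn1 : 1 ≤ n := by omega
  rw [Aset, block1_sig hn h1, Finset.erase_insert (one_not_mem_newA hn1)]

lemma Sset_sig : Sset n (sig n P) = newS n P := by
  have hn1 : 1 ≤ n := by omega
  ext x
  rw [Sset, Finset.mem_filter, mem_Icc]
  constructor
  · rintro ⟨hx, hmem⟩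
    rw [sig_parts hn h1] at hmem
    rcases mem_newParts.mp hmem with hh | hh | ⟨y, hy, hh⟩
    · have : (1:ℕ) ∈ ({x} : Finset ℕ) := by
        rw [hh]; exact Finset.mem_insert_self _ _
      rw [Finset.mem_singleton] at this
      omega
    · have := (mem_oParts hh).2.1
      simp at this
    · rw [Finset.singleton_inj] at hh
      rwa [hh]
  · intro hx
    have hb := newS_sub hn1 hx
    rw [mem_Icc] at hb
    refine ⟨hb, ?_⟩
    rw [sig_parts hn h1]
    exact mem_newParts.mpr (Or.inr (Or.inr ⟨x, hx, rfl⟩))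

lemma nsParts_sig : nsParts n (sig n P) = insert (insert 1 (newA n P)) (oParts n P) := by
  have hn1 : 1 ≤ n := by omega
  ext B
  rw [nsParts, Finset.mem_filter, sig_parts hn h1, Finset.mem_insert]
  constructor
  · rintro ⟨hmem, hcard⟩
    rcases mem_newParts.mp hmem with hh | hh | ⟨y, hy, hh⟩
    · exact Or.inl hh
    · exact Or.inr hh
    · rw [hh] at hcard
      simp at hcard
  · rintro (rfl | hB)
    · exact ⟨mem_newParts.mpr (Or.inl rfl), newB1_card hn1 h1⟩
    · exact ⟨mem_newParts.mpr (Or.inr (Or.inl hB)), (mem_oParts hB).2.1⟩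

lemma rstat_sig : rstat n (sig n P) = rstat n P := by
  have hn1 : 1 ≤ n := by omega
  rw [rstat, nsParts_sig hn h1, Finset.image_insert, blockMax_newB1 hn1 h1,
    rstat, nsParts_decomp hn1 h1, Finset.image_insert]

lemma newB1_not_mem_oParts : insert 1 (newA n P) ∉ oParts n P := by
  have hn1 : 1 ≤ n := by omega
  intro hmem
  exact (oParts_elem hn1 hmem (Finset.mem_insert_self 1 _)).1 (block1_mem hn1).2

lemma oParts_sig : oParts n (sig n P) = oParts n P := by
  rw [oParts, nsParts_sig hn h1, block1_sig hn h1,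
    Finset.erase_insert (newB1_not_mem_oParts hn h1)]

end QData

lemma swap_swap (A S I : Finset ℕ) :
    (((A \ I) ∪ (S ∩ I)) \ I) ∪ (((S \ I) ∪ (A ∩ I)) ∩ I) = A := by
  ext x
  simp only [Finset.mem_union, Finset.mem_sdiff, Finset.mem_inter]
  tauto

lemma finpart_ext {m : ℕ} {P Q : Finpartition (Finset.Icc 1 m)} (h : P.parts = Q.parts) :
    P = Q := by
  cases P
  cases Q
  simp_all

lemma main (hn : 3 ≤ n) (h1 : ({1} : Finset ℕ) ∉ P.parts) :
    X n (sig n P) = Y n P ∧ Y n (sig n P) = X n P ∧ sig n (sig n P) = P := by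
  have hn1 : 1 ≤ n := by omega
  have hQ1 := one_not_mem_sig hn h1
  have hXP := Xval hn1 h1
  have hYP := Yval (P := P) h1
  have hXQ := Xval hn1 hQ1
  have hYQ := Yval hQ1
  rw [rstat_sig hn h1] at hXQ hYQ
  have hsQ := sstat_spec (P := sig n P) hn1 hQ1
  rw [Aset_sig hn h1] at hsQ
  have htQ := tstat_spec (P := sig n P)
  rw [Sset_sig hn h1] at htQ
  have hsP := sstat_spec (P := P) hn1 h1
  have htP := tstat_spec (P := P)
  have hrb := rstat_bounds hn1 h1
  have hsb := sstat_bounds hn1 h1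
  have hcdef : cstat n P = min (rstat n P) (max (sstat n P) (tstat n P) + 1) := rfl
  have hcb := cstat_bounds hn1 h1
  have hcQdef : cstat n (sig n P) =
      min (rstat n P) (max (sstat n (sig n P)) (tstat n (sig n P)) + 1) := by
    rw [cstat, rstat_sig hn h1]
  have hmain : X n (sig n P) = Y n P ∧ Y n (sig n P) = X n P ∧
      cstat n (sig n P) = cstat n P := by
    rcases lt_or_ge (sstat n P) (cstat n P) with hsc | hsc <;>
      rcases lt_or_ge (tstat n P) (cstat n P) with htc | htc
    · -- both below c
      have htP' : tstat n P ∈ Sset n P ∧ ∀ x ∈ Sset n P, tstat n P ≤ x := by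
        rcases htP with ⟨he, hv⟩ | hg
        · omega
        · exact hg
      have hsv : sstat n (sig n P) = tstat n P := by
        apply le_antisymm
        · exact hsQ.2 _ ((mem_newA hn1).mpr (Or.inr ⟨htP'.1, htc⟩))
        · rcases (mem_newA hn1).mp hsQ.1 with ⟨_, hge⟩ | ⟨hS, _⟩
          · omega
          · exact htP'.2 _ hS
      have hsmem : sstat n P ∈ newS n P := (mem_newS hn1).mpr (Or.inr ⟨hsP.1, hsc⟩)
      have htv : tstat n (sig n P) = sstat n P := by
        rcases htQ with ⟨he, hv⟩ | ⟨htm, htlb⟩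
        · rw [he] at hsmem
          exact absurd hsmem (Finset.notMem_empty _)
        · apply le_antisymm (htlb _ hsmem)
          rcases (mem_newS hn1).mp htm with ⟨_, hge⟩ | ⟨hA, _⟩
          · omega
          · exact hsP.2 _ hA
      omega
    · -- s < c ≤ t
      have hceqr : cstat n P = rstat n P := by omega
      have hsmem : sstat n P ∈ newS n P := (mem_newS hn1).mpr (Or.inr ⟨hsP.1, hsc⟩)
      have htlbP : ∀ x ∈ Sset n P, tstat n P ≤ x := by
        rcases htP with ⟨he, hv⟩ | hg
        · intro x hx
          rw [he] at hx
          exact absurd hx (Finset.notMem_empty _)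
        · exact hg.2
      have htv : tstat n (sig n P) = sstat n P := by
        rcases htQ with ⟨he, hv⟩ | ⟨htm, htlb⟩
        · rw [he] at hsmem
          exact absurd hsmem (Finset.notMem_empty _)
        · apply le_antisymm (htlb _ hsmem)
          rcases (mem_newS hn1).mp htm with ⟨hS, hge⟩ | ⟨hA, _⟩
          · have := htlbP _ hS
            omega
          · exact hsP.2 _ hA
      have hsge : cstat n P ≤ sstat n (sig n P) := by
        rcases (mem_newA hn1).mp hsQ.1 with ⟨_, hge⟩ | ⟨hS, hlt⟩
        · exact hge
        · have := htlbP _ hS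
          omega
      omega
    · -- t < c ≤ s
      have hceqr : cstat n P = rstat n P := by omega
      have htP' : tstat n P ∈ Sset n P ∧ ∀ x ∈ Sset n P, tstat n P ≤ x := by
        rcases htP with ⟨he, hv⟩ | hg
        · omega
        · exact hg
      have hsv : sstat n (sig n P) = tstat n P := by
        apply le_antisymm
        · exact hsQ.2 _ ((mem_newA hn1).mpr (Or.inr ⟨htP'.1, htc⟩))
        · rcases (mem_newA hn1).mp hsQ.1 with ⟨_, hge⟩ | ⟨hS, _⟩
          · omega
          · exact htP'.2 _ hS
      have htge : cstat n P ≤ tstat n (sig n P) := by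
        rcases htQ with ⟨he, hv⟩ | ⟨htm, htlb⟩
        · omega
        · rcases (mem_newS hn1).mp htm with ⟨_, hge⟩ | ⟨hA, hlt⟩
          · exact hge
          · have := hsP.2 _ hA
            omega
      omega
    · -- c ≤ s, c ≤ t
      have hceqr : cstat n P = rstat n P := by omega
      have htlbP : ∀ x ∈ Sset n P, tstat n P ≤ x := by
        rcases htP with ⟨he, hv⟩ | hg
        · intro x hx
          rw [he] at hx
          exact absurd hx (Finset.notMem_empty _)
        · exact hg.2
      have hsv : sstat n (sig n P) = sstat n P := by
        apply le_antisymm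
        · exact hsQ.2 _ ((mem_newA hn1).mpr (Or.inl ⟨hsP.1, hsc⟩))
        · rcases (mem_newA hn1).mp hsQ.1 with ⟨hA, _⟩ | ⟨hS, hlt⟩
          · exact hsP.2 _ hA
          · have := htlbP _ hS
            omega
      have htge : cstat n P ≤ tstat n (sig n P) := by
        rcases htQ with ⟨he, hv⟩ | ⟨htm, htlb⟩
        · omega
        · rcases (mem_newS hn1).mp htm with ⟨_, hge⟩ | ⟨hA, hlt⟩
          · exact hge
          · have := hsP.2 _ hA
            omega
      omega
  refine ⟨hmain.1, hmain.2.1, ?_⟩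
  apply finpart_ext
  have hA2 : newA n (sig n P) = Aset n P := by
    rw [newA, Aset_sig hn h1, Sset_sig hn h1, hmain.2.2, newA, newS]
    exact swap_swap _ _ _
  have hS2 : newS n (sig n P) = Sset n P := by
    rw [newS, Aset_sig hn h1, Sset_sig hn h1, hmain.2.2, newA, newS]
    exact swap_swap _ _ _
  rw [sig_parts hn hQ1, newParts, hA2, hS2, oParts_sig hn h1,
    ← block1_eq_insert hn1]
  exact (parts_decomp' hn1 h1).symm

lemma sig_swap (hn : 3 ≤ n) (P : Finpartition (Finset.Icc 1 n)) :
    X n (sig n P) = Y n P ∧ Y n (sig n P) = X n P := by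
  by_cases h1 : ({1} : Finset ℕ) ∈ P.parts
  · have hsig : sig n P = P := by rw [sig, dif_pos (Or.inl h1)]
    have hx : X n P = 1 := X_one (by omega) h1
    have hy : Y n P = 1 := by rw [Y, if_pos h1]
    rw [hsig, hx, hy]
    exact ⟨rfl, rfl⟩
  · exact ⟨(main hn h1).1, (main hn h1).2.1⟩

lemma sig_sig (hn : 3 ≤ n) (P : Finpartition (Finset.Icc 1 n)) :
    sig n (sig n P) = P := by
  by_cases h1 : ({1} : Finset ℕ) ∈ P.parts
  · have hsig : sig n P = P := by rw [sig, dif_pos (Or.inl h1)]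
    rw [hsig, hsig]
  · exact (main hn h1).2.2

end Stmt5

/-- for n ≥ 3, σ restricts to a bijection between partitions with X < Y
and partitions with X > Y; in particular the two sets are equinumerous. -/
theorem statement5 (n : ℕ) (hn : 3 ≤ n) :
    ∃ σ : Finpartition (Finset.Icc 1 n) → Finpartition (Finset.Icc 1 n),
      (∀ P, σ (σ P) = P) ∧
      (∀ P, X n (σ P) = Y n P ∧ Y n (σ P) = X n P) ∧
      (∀ P, X n P < Y n P → Y n (σ P) < X n (σ P)) ∧
      (∀ P, Y n P < X n P → X n (σ P) < Y n (σ P)) ∧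
      Nat.card {P : Finpartition (Finset.Icc 1 n) // X n P < Y n P} =
        Nat.card {P : Finpartition (Finset.Icc 1 n) // Y n P < X n P} := by
  refine ⟨Stmt5.sig n, Stmt5.sig_sig hn, fun P => Stmt5.sig_swap hn P, ?_, ?_, ?_⟩
  · intro P h
    have hs := Stmt5.sig_swap hn P
    omega
  · intro P h
    have hs := Stmt5.sig_swap hn P
    omega
  · exact Nat.card_congr
      { toFun := fun p => ⟨Stmt5.sig n p.1, by
          have hs := Stmt5.sig_swap hn p.1
          have := p.2
          omega⟩
        invFun := fun p => ⟨Stmt5.sig n p.1, by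
          have hs := Stmt5.sig_swap hn p.1
          have := p.2
          omega⟩
        left_inv := fun p => Subtype.ext (Stmt5.sig_sig hn p.1)
        right_inv := fun p => Subtype.ext (Stmt5.sig_sig hn p.1) }
end

section
/- For n ≥ 3, the number of partitions P of [n] with X(P) = k equals the number of partitions P of [n] with Y(P) = k, for every k with 1 ≤ k ≤ n. -/
variable {n : ℕ}

lemma min_getD_le {s : Finset ℕ} {a : ℕ} (ha : a ∈ s) : s.min.getD 0 ≤ a := by
  obtain ⟨b, hb⟩ := Finset.min_of_mem ha
  have h2 := Finset.min_le ha
  rw [hb] at h2 ⊢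
  exact_mod_cast h2

lemma le_min_getD {s : Finset ℕ} {k : ℕ} (hs : s.Nonempty) (h : ∀ a ∈ s, k ≤ a) :
    k ≤ s.min.getD 0 := by
  obtain ⟨a, ha⟩ := hs
  obtain ⟨b, hb⟩ := Finset.min_of_mem ha
  have hbs : b ∈ s := Finset.mem_of_min hb
  rw [hb]
  exact h b hbs

variable {n : ℕ}

lemma parts_nonempty (hn : 1 ≤ n) (P : Finpartition (Finset.Icc 1 n)) : P.parts.Nonempty := by
  apply P.parts_nonempty
  intro h
  have : (1 : ℕ) ∈ (⊥ : Finset ℕ) := by rw [← h]; simp [hn]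
  simp at this

lemma X_ge_iff (hn : 1 ≤ n) {P : Finpartition (Finset.Icc 1 n)} {k : ℕ} :
    k ≤ X n P ↔ ∀ B ∈ P.parts, k ≤ blockMax B := by
  constructor
  · intro h B hB
    exact le_trans h (min_getD_le (Finset.mem_image_of_mem _ hB))
  · intro h
    apply le_min_getD ((parts_nonempty hn P).image _)
    intro a ha
    obtain ⟨B, hB, rfl⟩ := Finset.mem_image.1 ha
    exact h B hB

lemma one_mem_Icc (hn : 1 ≤ n) : 1 ∈ Finset.Icc 1 n := by simp [hn]

lemma block1_eq_part (hn : 1 ≤ n) (P : Finpartition (Finset.Icc 1 n)) :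
    block1 n P = P.part 1 := by
  apply le_antisymm
  · apply Finset.sup_le
    intro B hB
    split_ifs with h
    · rw [P.part_eq_of_mem hB h]
    · exact Finset.empty_subset _
  · have h1 := P.part_mem.2 (one_mem_Icc hn)
    have h2 := P.mem_part (one_mem_Icc hn)
    have : P.part 1 = (fun B => if 1 ∈ B then B else ∅) (P.part 1) := by simp [h2]
    rw [this]
    exact Finset.le_sup (f := fun B => if 1 ∈ B then B else ∅) h1

lemma block1_mem (hn : 1 ≤ n) (P : Finpartition (Finset.Icc 1 n)) :
    block1 n P ∈ P.parts := by rw [block1_eq_part hn]; exact P.part_mem.2 (one_mem_Icc hn)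

lemma one_mem_block1 (hn : 1 ≤ n) (P : Finpartition (Finset.Icc 1 n)) :
    1 ∈ block1 n P := by rw [block1_eq_part hn]; exact P.mem_part (one_mem_Icc hn)

lemma block1_eq_of_mem (hn : 1 ≤ n) {P : Finpartition (Finset.Icc 1 n)} {B : Finset ℕ}
    (hB : B ∈ P.parts) (h1 : 1 ∈ B) : block1 n P = B := by
  rw [block1_eq_part hn]; exact P.part_eq_of_mem hB h1

lemma part_subset {P : Finpartition (Finset.Icc 1 n)} {B : Finset ℕ} (hB : B ∈ P.parts) :
    B ⊆ Finset.Icc 1 n := P.le hB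

lemma le_blockMax {B : Finset ℕ} {a : ℕ} (ha : a ∈ B) : a ≤ blockMax B := Finset.le_sup (f := id) ha

lemma blockMax_mem {B : Finset ℕ} (hB : B.Nonempty) : blockMax B ∈ B := by
  have : blockMax B = B.max' hB := by
    rw [blockMax, ← Finset.sup'_eq_sup hB id, Finset.max'_eq_sup']
  rw [this]; exact B.max'_mem hB

lemma blockMax_le_n {B : Finset ℕ} (hB : B ⊆ Finset.Icc 1 n) : blockMax B ≤ n := by
  apply Finset.sup_le; intro a ha; exact (Finset.mem_Icc.1 (hB ha)).2

lemma one_le_blockMax {B : Finset ℕ} (hB : B ⊆ Finset.Icc 1 n) (h : B.Nonempty) :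
    1 ≤ blockMax B := by
  obtain ⟨a, ha⟩ := h
  exact le_trans (Finset.mem_Icc.1 (hB ha)).1 (le_blockMax ha)

lemma blockMin_eq_one {B : Finset ℕ} (h1 : 1 ∈ B) (hB : B ⊆ Finset.Icc 1 n) :
    blockMin B = 1 := by
  apply le_antisymm (min_getD_le h1)
  apply le_min_getD ⟨1, h1⟩
  intro a ha; exact (Finset.mem_Icc.1 (hB ha)).1

lemma block1_card (hn : 1 ≤ n) {P : Finpartition (Finset.Icc 1 n)} (h1 : ({1} : Finset ℕ) ∉ P.parts) :
    2 ≤ (block1 n P).card := by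
  have hm := block1_mem hn P
  have h1m := one_mem_block1 hn P
  by_contra h
  push_neg at h
  interval_cases hc : (block1 n P).card
  · exact absurd (Finset.card_eq_zero.1 hc ▸ h1m) (by simp)
  · obtain ⟨a, ha⟩ := Finset.card_eq_one.1 hc
    rw [ha] at h1m hm
    have : a = 1 := (Finset.mem_singleton.1 h1m).symm
    subst this
    exact h1 hm

lemma erase_one_nonempty (hn : 1 ≤ n) {P : Finpartition (Finset.Icc 1 n)}
    (h1 : ({1} : Finset ℕ) ∉ P.parts) : ((block1 n P).erase 1).Nonempty := by
  rw [← Finset.card_pos, Finset.card_erase_of_mem (one_mem_block1 hn P)]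
  have := block1_card hn h1
  omega

lemma secondMin_block1 (hn : 1 ≤ n) (P : Finpartition (Finset.Icc 1 n)) :
    secondMin (block1 n P) = ((block1 n P).erase 1).min.getD 0 := by
  rw [secondMin, blockMin_eq_one (one_mem_block1 hn P) (part_subset (block1_mem hn P))]

lemma Y_ge_iff (hn : 1 ≤ n) {P : Finpartition (Finset.Icc 1 n)} {k : ℕ} (hk : 2 ≤ k) :
    k ≤ Y n P ↔ (({1} : Finset ℕ) ∉ P.parts ∧
      (∀ B ∈ P.parts, 2 ≤ B.card → k ≤ blockMax B) ∧
      ∀ a ∈ (block1 n P).erase 1, k ≤ a) := by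
  rw [Y]
  split_ifs with h
  · constructor
    · intro hh; omega
    · rintro ⟨h1, -⟩; exact absurd h h1
  · rw [le_min_iff, secondMin_block1 hn]
    constructor
    · rintro ⟨hr, hs⟩
      refine ⟨h, fun B hB hB2 => ?_, fun a ha => ?_⟩
      · exact le_trans hr (min_getD_le
          (Finset.mem_image_of_mem _ (Finset.mem_filter.2 ⟨hB, hB2⟩)))
      · exact le_trans hs (min_getD_le ha)
    · rintro ⟨-, hr, hs⟩
      constructor
      · apply le_min_getD
        · exact ⟨blockMax (block1 n P), Finset.mem_image_of_mem _
            (Finset.mem_filter.2 ⟨block1_mem hn P, block1_card hn h⟩)⟩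
        · intro a ha
          obtain ⟨B, hB, rfl⟩ := Finset.mem_image.1 ha
          exact hr B (Finset.mem_filter.1 hB).1 (Finset.mem_filter.1 hB).2
      · exact le_min_getD (erase_one_nonempty hn h) hs

lemma one_le_X (hn : 1 ≤ n) (P : Finpartition (Finset.Icc 1 n)) : 1 ≤ X n P := by
  rw [X_ge_iff hn]
  intro B hB
  exact one_le_blockMax (part_subset hB) (P.nonempty_of_mem_parts hB)

lemma X_le_n (hn : 1 ≤ n) (P : Finpartition (Finset.Icc 1 n)) : X n P ≤ n := by
  obtain ⟨B, hB⟩ := parts_nonempty hn P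
  exact le_trans (min_getD_le (Finset.mem_image_of_mem _ hB)) (blockMax_le_n (part_subset hB))

lemma one_le_Y (hn : 1 ≤ n) (P : Finpartition (Finset.Icc 1 n)) : 1 ≤ Y n P := by
  rw [Y]
  split_ifs with h
  · exact le_refl 1
  · rw [le_min_iff, secondMin_block1 hn]
    constructor
    · apply le_min_getD
      · exact ⟨blockMax (block1 n P), Finset.mem_image_of_mem _
          (Finset.mem_filter.2 ⟨block1_mem hn P, block1_card hn h⟩)⟩
      · intro a ha
        obtain ⟨B, hB, rfl⟩ := Finset.mem_image.1 ha
        have hB' := (Finset.mem_filter.1 hB).1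
        exact one_le_blockMax (part_subset hB') (P.nonempty_of_mem_parts hB')
    · apply le_min_getD (erase_one_nonempty hn h)
      intro a ha
      exact (Finset.mem_Icc.1 (part_subset (block1_mem hn P)
        (Finset.mem_of_mem_erase ha))).1

lemma Y_le_n (hn : 1 ≤ n) (P : Finpartition (Finset.Icc 1 n)) : Y n P ≤ n := by
  rw [Y]
  split_ifs with h
  · exact hn
  · apply le_trans (min_le_right _ _)
    rw [secondMin_block1 hn]
    obtain ⟨a, ha⟩ := erase_one_nonempty hn h
    exact le_trans (min_getD_le ha)
      ((Finset.mem_Icc.1 (part_subset (block1_mem hn P) (Finset.mem_of_mem_erase ha))).2)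

def bigOf (k : ℕ) (C : Finset ℕ) : Finset ℕ := insert 1 (C.filter (fun a => k ≤ a))

def smallsOf (k : ℕ) (C : Finset ℕ) : Finset (Finset ℕ) :=
  (C.filter (fun a => 1 < a ∧ a < k)).image (fun a => ({a} : Finset ℕ))

lemma mem_smallsOf {k : ℕ} {C B : Finset ℕ} :
    B ∈ smallsOf k C ↔ ∃ a ∈ C, 1 < a ∧ a < k ∧ B = {a} := by
  simp only [smallsOf, Finset.mem_image, Finset.mem_filter]
  constructor
  · rintro ⟨a, ⟨h1, h2, h3⟩, rfl⟩; exact ⟨a, h1, h2, h3, rfl⟩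
  · rintro ⟨a, h1, h2, h3, rfl⟩; exact ⟨a, ⟨h1, h2, h3⟩, rfl⟩

def phiParts (n k : ℕ) (P : Finpartition (Finset.Icc 1 n)) : Finset (Finset ℕ) :=
  insert (bigOf k (block1 n P))
    ((P.parts.erase (block1 n P)) ∪ smallsOf k (block1 n P))

def phi (k : ℕ) (hn : 1 ≤ n) (P : Finpartition (Finset.Icc 1 n)) :
    Finpartition (Finset.Icc 1 n) where
  parts := phiParts n k P
  supIndep := by
    set C := block1 n P with hC
    have hCmem := block1_mem hn P
    have h1C := one_mem_block1 hn P
    have hbigC : bigOf k C ⊆ C := by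
      intro x hx
      rcases Finset.mem_insert.1 hx with rfl | hx
      · exact h1C
      · exact (Finset.mem_filter.1 hx).1
    have aux1 : ∀ D, D ∈ P.parts → D ≠ C → Disjoint (bigOf k C) D := fun D hD hne =>
      (P.disjoint hCmem hD (Ne.symm hne)).mono_left hbigC
    have aux2 : ∀ a, a ∈ C → 1 < a → a < k → Disjoint (bigOf k C) {a} := by
      intro a _ h1 h2
      rw [Finset.disjoint_singleton_right, bigOf, Finset.mem_insert]
      push_neg
      refine ⟨by omega, fun h => ?_⟩
      have := (Finset.mem_filter.1 h).2
      omega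
    have aux3 : ∀ D a, D ∈ P.parts → D ≠ C → a ∈ C → Disjoint D {a} := by
      intro D a hD hne ha
      rw [Finset.disjoint_singleton_right]
      intro haD
      exact (Finset.disjoint_left.1 (P.disjoint hD hCmem hne)) haD ha
    rw [Finset.supIndep_iff_pairwiseDisjoint]
    intro A hA B hB hAB
    simp only [phiParts, Finset.coe_insert, Set.mem_insert_iff, Finset.coe_union,
      Set.mem_union, Finset.mem_coe, Finset.mem_erase, mem_smallsOf] at hA hB
    show Disjoint A B
    rcases hA with rfl | ⟨hne, hmem⟩ | ⟨a, haC, ha1, hak, rfl⟩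
    · rcases hB with rfl | ⟨hne', hmem'⟩ | ⟨b, hbC, hb1, hbk, rfl⟩
      · exact absurd rfl hAB
      · exact aux1 B hmem' hne'
      · exact aux2 b hbC hb1 hbk
    · rcases hB with rfl | ⟨hne', hmem'⟩ | ⟨b, hbC, hb1, hbk, rfl⟩
      · exact (aux1 A hmem hne).symm
      · exact P.disjoint hmem hmem' hAB
      · exact aux3 A b hmem hne hbC
    · rcases hB with rfl | ⟨hne', hmem'⟩ | ⟨b, hbC, hb1, hbk, rfl⟩
      · exact (aux2 a haC ha1 hak).symm
      · exact (aux3 B a hmem' hne' haC).symm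
      · rw [Finset.disjoint_singleton_right, Finset.mem_singleton]
        intro h
        exact hAB (by rw [h])
  sup_parts := by
    set C := block1 n P with hC
    have hCmem := block1_mem hn P
    have h1C := one_mem_block1 hn P
    apply le_antisymm
    · apply Finset.sup_le
      intro B hB
      simp only [phiParts, Finset.mem_insert, Finset.mem_union, Finset.mem_erase,
        mem_smallsOf] at hB
      rcases hB with rfl | ⟨-, hmem⟩ | ⟨a, haC, -, -, rfl⟩
      · intro x hx
        rcases Finset.mem_insert.1 hx with rfl | hx
        · exact one_mem_Icc hn
        · exact part_subset hCmem (Finset.mem_filter.1 hx).1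
      · exact part_subset hmem
      · intro x hx
        rw [Finset.mem_singleton.1 hx]
        exact part_subset hCmem haC
    · intro x hx
      rw [Finset.mem_sup]
      obtain ⟨B, hB, hxB⟩ := P.exists_mem hx
      by_cases hBC : B = C
      · rw [hBC] at hxB
        have hx1 : 1 ≤ x := (Finset.mem_Icc.1 hx).1
        by_cases h1 : x = 1
        · exact ⟨bigOf k C, Finset.mem_insert_self _ _, by simp [bigOf, h1]⟩
        · by_cases h2 : k ≤ x
          · exact ⟨bigOf k C, Finset.mem_insert_self _ _,
              Finset.mem_insert_of_mem (Finset.mem_filter.2 ⟨hxB, h2⟩)⟩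
          · refine ⟨{x}, ?_, Finset.mem_singleton_self x⟩
            apply Finset.mem_insert_of_mem
            apply Finset.mem_union_right
            exact mem_smallsOf.2 ⟨x, hxB, by omega, by omega, rfl⟩
      · exact ⟨B, Finset.mem_insert_of_mem (Finset.mem_union_left _
          (Finset.mem_erase.2 ⟨hBC, hB⟩)), hxB⟩
  bot_notMem := by
    intro h
    rcases Finset.mem_insert.1 h with h | h
    · have : (1 : ℕ) ∈ (⊥ : Finset ℕ) := by rw [h]; exact Finset.mem_insert_self 1 _
      simp at this
    · rcases Finset.mem_union.1 h with h | h
      · exact P.bot_notMem (Finset.mem_of_mem_erase h)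
      · obtain ⟨a, -, -, -, h⟩ := mem_smallsOf.1 h
        exact absurd h.symm (Finset.singleton_ne_empty a)

lemma phi_parts (k : ℕ) (hn : 1 ≤ n) (P : Finpartition (Finset.Icc 1 n)) :
    (phi k hn P).parts = phiParts n k P := rfl

def keptOf (n k : ℕ) (Q : Finpartition (Finset.Icc 1 n)) : Finset (Finset ℕ) :=
  (Q.parts.erase (block1 n Q)).filter (fun B => ¬(B.card = 1 ∧ blockMax B < k))

def newCOf (n k : ℕ) (Q : Finpartition (Finset.Icc 1 n)) : Finset ℕ :=
  block1 n Q ∪ (Finset.Icc 1 (k-1)).filter (fun a => ({a} : Finset ℕ) ∈ Q.parts)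

lemma blockMax_singleton (a : ℕ) : blockMax {a} = a := by simp [blockMax]

lemma mem_newCOf_elim {k : ℕ} {Q : Finpartition (Finset.Icc 1 n)} {x : ℕ}
    (hx : x ∈ newCOf n k Q) :
    x ∈ block1 n Q ∨ (1 ≤ x ∧ x < k ∧ ({x} : Finset ℕ) ∈ Q.parts) := by
  rcases Finset.mem_union.1 hx with h | h
  · exact Or.inl h
  · right
    obtain ⟨h1, h2⟩ := Finset.mem_filter.1 h
    obtain ⟨h3, h4⟩ := Finset.mem_Icc.1 h1
    exact ⟨h3, by omega, h2⟩

def psi (k : ℕ) (hn : 1 ≤ n) (Q : Finpartition (Finset.Icc 1 n)) :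
    Finpartition (Finset.Icc 1 n) where
  parts := insert (newCOf n k Q) (keptOf n k Q)
  supIndep := by
    set D := block1 n Q with hD
    have hDmem := block1_mem hn Q
    have auxkept : ∀ E ∈ keptOf n k Q, Disjoint (newCOf n k Q) E := by
      intro E hE
      obtain ⟨hE1, hE2⟩ := Finset.mem_filter.1 hE
      obtain ⟨hEne, hEmem⟩ := Finset.mem_erase.1 hE1
      rw [Finset.disjoint_left]
      intro x hx hxE
      rcases mem_newCOf_elim hx with h | ⟨h1, h2, h3⟩
      · exact (Finset.disjoint_left.1 (Q.disjoint hDmem hEmem (Ne.symm hEne))) h hxE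
      · have : E = {x} := Q.eq_of_mem_parts hEmem h3 hxE (Finset.mem_singleton_self x)
        apply hE2
        rw [this, blockMax_singleton]
        exact ⟨Finset.card_singleton x, h2⟩
    rw [Finset.supIndep_iff_pairwiseDisjoint]
    intro A hA B hB hAB
    simp only [Finset.coe_insert, Set.mem_insert_iff, Finset.mem_coe] at hA hB
    show Disjoint A B
    rcases hA with rfl | hA
    · rcases hB with rfl | hB
      · exact absurd rfl hAB
      · exact auxkept B hB
    · rcases hB with rfl | hB
      · exact (auxkept A hA).symm
      · exact Q.disjoint (Finset.mem_of_mem_erase (Finset.mem_filter.1 hA).1)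
          (Finset.mem_of_mem_erase (Finset.mem_filter.1 hB).1) hAB
  sup_parts := by
    have hDmem := block1_mem hn Q
    apply le_antisymm
    · apply Finset.sup_le
      intro B hB
      rcases Finset.mem_insert.1 hB with rfl | hB
      · intro x hx
        rcases mem_newCOf_elim hx with h | ⟨-, -, h3⟩
        · exact part_subset hDmem h
        · exact part_subset h3 (Finset.mem_singleton_self x)
      · exact part_subset (Finset.mem_of_mem_erase (Finset.mem_filter.1 hB).1)
    · intro x hx
      rw [Finset.mem_sup]
      obtain ⟨B, hB, hxB⟩ := Q.exists_mem hx
      by_cases hBD : B = block1 n Q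
      · exact ⟨newCOf n k Q, Finset.mem_insert_self _ _,
          Finset.mem_union_left _ (hBD ▸ hxB)⟩
      · by_cases hsmall : B.card = 1 ∧ blockMax B < k
        · refine ⟨newCOf n k Q, Finset.mem_insert_self _ _, Finset.mem_union_right _ ?_⟩
          obtain ⟨a, ha⟩ := Finset.card_eq_one.1 hsmall.1
          have hxa : x = a := Finset.mem_singleton.1 (ha ▸ hxB)
          subst hxa
          have hmax : blockMax B = x := by rw [ha, blockMax_singleton]
          have hx1 : 1 ≤ x := (Finset.mem_Icc.1 hx).1
          refine Finset.mem_filter.2 ⟨Finset.mem_Icc.2 ⟨hx1, ?_⟩, ha ▸ hB⟩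
          omega
        · exact ⟨B, Finset.mem_insert_of_mem
            (Finset.mem_filter.2 ⟨Finset.mem_erase.2 ⟨hBD, hB⟩, hsmall⟩), hxB⟩
  bot_notMem := by
    intro h
    rcases Finset.mem_insert.1 h with h | h
    · have : (1 : ℕ) ∈ (⊥ : Finset ℕ) := by
        rw [h]; exact Finset.mem_union_left _ (one_mem_block1 hn Q)
      simp at this
    · exact Q.bot_notMem (Finset.mem_of_mem_erase (Finset.mem_filter.1 h).1)

lemma psi_parts (k : ℕ) (hn : 1 ≤ n) (Q : Finpartition (Finset.Icc 1 n)) :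
    (psi k hn Q).parts = insert (newCOf n k Q) (keptOf n k Q) := rfl

lemma bigOf_subset {k : ℕ} {C : Finset ℕ} (h1 : 1 ∈ C) : bigOf k C ⊆ C := by
  intro x hx
  rcases Finset.mem_insert.1 hx with rfl | hx
  · exact h1
  · exact (Finset.mem_filter.1 hx).1

lemma blockMax_block1_mem_big {k : ℕ} (hn : 1 ≤ n) {P : Finpartition (Finset.Icc 1 n)}
    (hP : k ≤ X n P) : blockMax (block1 n P) ∈ bigOf k (block1 n P) := by
  have hne := P.nonempty_of_mem_parts (block1_mem hn P)
  exact Finset.mem_insert_of_mem (Finset.mem_filter.2 ⟨blockMax_mem hne,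
    (X_ge_iff hn).1 hP _ (block1_mem hn P)⟩)

lemma big_mem_phiParts {k : ℕ} (P : Finpartition (Finset.Icc 1 n)) :
    bigOf k (block1 n P) ∈ phiParts n k P := Finset.mem_insert_self _ _

lemma block1_phi {k : ℕ} (hn : 1 ≤ n) (P : Finpartition (Finset.Icc 1 n)) :
    block1 n (phi k hn P) = bigOf k (block1 n P) :=
  block1_eq_of_mem hn (big_mem_phiParts P) (Finset.mem_insert_self _ _)

lemma Y_phi {k : ℕ} (hn : 1 ≤ n) (hk : 2 ≤ k) {P : Finpartition (Finset.Icc 1 n)}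
    (hP : k ≤ X n P) : k ≤ Y n (phi k hn P) := by
  set C := block1 n P with hC
  have hCmem := block1_mem hn P
  have h1C := one_mem_block1 hn P
  have hXall := (X_ge_iff hn).1 hP
  have hmaxbig := blockMax_block1_mem_big hn hP
  have hmaxk : k ≤ blockMax C := hXall C hCmem
  rw [Y_ge_iff hn hk]
  refine ⟨?_, ?_, ?_⟩
  · -- {1} is not a part of phi
    intro h
    rcases Finset.mem_insert.1 h with h | h
    · have h2 : blockMax C ∈ ({1} : Finset ℕ) := by rw [h]; exact hmaxbig
      have := Finset.mem_singleton.1 h2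
      omega
    · rcases Finset.mem_union.1 h with h | h
      · obtain ⟨hne, hmem⟩ := Finset.mem_erase.1 h
        exact hne (block1_eq_of_mem hn hmem (Finset.mem_singleton_self 1)).symm
      · obtain ⟨a, -, ha1, -, ha⟩ := mem_smallsOf.1 h
        have : a = 1 := (Finset.mem_singleton.1 (ha ▸ Finset.mem_singleton_self 1)).symm
        omega
  · -- all non-singleton parts have max ≥ k
    intro B hB hB2
    rcases Finset.mem_insert.1 hB with rfl | hB
    · exact le_trans hmaxk (le_blockMax hmaxbig)
    · rcases Finset.mem_union.1 hB with h | h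
      · exact hXall B (Finset.mem_of_mem_erase h)
      · obtain ⟨a, -, -, -, rfl⟩ := mem_smallsOf.1 h
        simp at hB2
  · -- second min of the block of 1 is ≥ k
    intro a ha
    rw [block1_phi hn P] at ha
    obtain ⟨hane, hamem⟩ := Finset.mem_erase.1 ha
    rcases Finset.mem_insert.1 hamem with rfl | h
    · exact absurd rfl hane
    · exact (Finset.mem_filter.1 h).2

lemma X_psi {k : ℕ} (hn : 1 ≤ n) (hk : 2 ≤ k) {Q : Finpartition (Finset.Icc 1 n)}
    (hQ : k ≤ Y n Q) : k ≤ X n (psi k hn Q) := by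
  obtain ⟨h1, hr, hs⟩ := (Y_ge_iff hn hk).1 hQ
  set D := block1 n Q with hD
  have hDmem := block1_mem hn Q
  have hD2 : 2 ≤ D.card := block1_card hn h1
  rw [X_ge_iff hn]
  intro B hB
  rcases Finset.mem_insert.1 hB with rfl | hB
  · have hDmax : k ≤ blockMax D := hr D hDmem hD2
    have : blockMax D ∈ newCOf n k Q :=
      Finset.mem_union_left _ (blockMax_mem (Q.nonempty_of_mem_parts hDmem))
    exact le_trans hDmax (le_blockMax this)
  · obtain ⟨hB1, hB2⟩ := Finset.mem_filter.1 hB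
    have hBmem := Finset.mem_of_mem_erase hB1
    by_cases hc : B.card = 1
    · push_neg at hB2
      exact le_of_not_gt (by simpa using hB2 hc)
    · have hpos : 0 < B.card := Finset.card_pos.2 (Q.nonempty_of_mem_parts hBmem)
      exact hr B hBmem (by omega)

lemma singleton_mem_phiParts_iff {k : ℕ} (hn : 1 ≤ n) {P : Finpartition (Finset.Icc 1 n)}
    (hP : k ≤ X n P) {a : ℕ} (hak : a < k) :
    ({a} : Finset ℕ) ∈ phiParts n k P ↔ a ∈ block1 n P ∧ 1 < a := by
  set C := block1 n P with hC
  have hXall := (X_ge_iff hn).1 hP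
  have hmaxbig := blockMax_block1_mem_big hn hP
  have hmaxk : k ≤ blockMax C := hXall C (block1_mem hn P)
  constructor
  · intro h
    rcases Finset.mem_insert.1 h with h | h
    · exfalso
      have h2 : blockMax C ∈ ({a} : Finset ℕ) := by rw [h]; exact hmaxbig
      have := Finset.mem_singleton.1 h2
      omega
    · rcases Finset.mem_union.1 h with h | h
      · exfalso
        have hmem := Finset.mem_of_mem_erase h
        have := hXall _ hmem
        rw [blockMax_singleton] at this
        omega
      · obtain ⟨b, hbC, hb1, -, hb⟩ := mem_smallsOf.1 h
        have : a = b := Finset.singleton_injective hb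
        subst this
        exact ⟨hbC, hb1⟩
  · rintro ⟨haC, ha1⟩
    exact Finset.mem_insert_of_mem (Finset.mem_union_right _
      (mem_smallsOf.2 ⟨a, haC, ha1, hak, rfl⟩))

lemma psi_phi {k : ℕ} (hn : 1 ≤ n) (hk : 2 ≤ k) {P : Finpartition (Finset.Icc 1 n)}
    (hP : k ≤ X n P) : psi k hn (phi k hn P) = P := by
  set C := block1 n P with hC
  have hCmem := block1_mem hn P
  have h1C := one_mem_block1 hn P
  have hXall := (X_ge_iff hn).1 hP
  have hmaxbig := blockMax_block1_mem_big hn hP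
  have hmaxk : k ≤ blockMax C := hXall C hCmem
  have hCIcc := part_subset hCmem
  -- newCOf of phi P is C
  have hnewC : newCOf n k (phi k hn P) = C := by
    ext x
    rw [newCOf, block1_phi hn P, Finset.mem_union]
    constructor
    · rintro (h | h)
      · exact bigOf_subset h1C h
      · obtain ⟨hIcc, hsing⟩ := Finset.mem_filter.1 h
        obtain ⟨hx1, hxk⟩ := Finset.mem_Icc.1 hIcc
        have hxlt : x < k := by omega
        exact ((singleton_mem_phiParts_iff hn hP hxlt).1 hsing).1
    · intro hxC
      have hx1 : 1 ≤ x := (Finset.mem_Icc.1 (hCIcc hxC)).1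
      by_cases h1 : x = 1
      · exact Or.inl (by rw [h1]; exact Finset.mem_insert_self _ _)
      · by_cases h2 : k ≤ x
        · exact Or.inl (Finset.mem_insert_of_mem (Finset.mem_filter.2 ⟨hxC, h2⟩))
        · refine Or.inr (Finset.mem_filter.2 ⟨Finset.mem_Icc.2 ⟨hx1, by omega⟩, ?_⟩)
          exact (singleton_mem_phiParts_iff hn hP (by omega)).2 ⟨hxC, by omega⟩
  -- keptOf of phi P is P.parts minus C
  have hbig_notmem : bigOf k C ∉ (P.parts.erase C) ∪ smallsOf k C := by
    intro h
    rcases Finset.mem_union.1 h with h | h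
    · obtain ⟨hne, hmem⟩ := Finset.mem_erase.1 h
      exact hne (block1_eq_of_mem hn hmem (Finset.mem_insert_self 1 _)).symm
    · obtain ⟨a, -, -, hak, ha⟩ := mem_smallsOf.1 h
      have h2 : blockMax C ∈ ({a} : Finset ℕ) := by rw [← ha]; exact hmaxbig
      have := Finset.mem_singleton.1 h2
      omega
  have hkept : keptOf n k (phi k hn P) = P.parts.erase C := by
    rw [keptOf, block1_phi hn P]
    have herase : (phi k hn P).parts.erase (bigOf k C) =
        (P.parts.erase C) ∪ smallsOf k C := by
      rw [phi_parts, phiParts, Finset.erase_insert hbig_notmem]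
    rw [herase]
    ext B
    rw [Finset.mem_filter, Finset.mem_union]
    constructor
    · rintro ⟨h | h, hpred⟩
      · exact h
      · exfalso
        obtain ⟨a, -, -, hak, rfl⟩ := mem_smallsOf.1 h
        exact hpred ⟨Finset.card_singleton a, by rw [blockMax_singleton]; omega⟩
    · intro h
      refine ⟨Or.inl h, ?_⟩
      rintro ⟨-, hlt⟩
      have := hXall B (Finset.mem_of_mem_erase h)
      omega
  apply Finpartition.ext
  rw [psi_parts, hnewC, hkept, Finset.insert_erase hCmem]

lemma block1_psi {k : ℕ} (hn : 1 ≤ n) (Q : Finpartition (Finset.Icc 1 n)) :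
    block1 n (psi k hn Q) = newCOf n k Q :=
  block1_eq_of_mem hn (Finset.mem_insert_self _ _)
    (Finset.mem_union_left _ (one_mem_block1 hn Q))

lemma phi_psi {k : ℕ} (hn : 1 ≤ n) (hk : 2 ≤ k) {Q : Finpartition (Finset.Icc 1 n)}
    (hQ : k ≤ Y n Q) : phi k hn (psi k hn Q) = Q := by
  obtain ⟨h1, hr, hs⟩ := (Y_ge_iff hn hk).1 hQ
  set D := block1 n Q with hD
  have hDmem := block1_mem hn Q
  have h1D := one_mem_block1 hn Q
  have hD2 : 2 ≤ D.card := block1_card hn h1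
  -- elements of D other than 1 are ≥ k
  have hsD : ∀ a ∈ D, a ≠ 1 → k ≤ a := fun a ha hne =>
    hs a (Finset.mem_erase.2 ⟨hne, ha⟩)
  -- the big block reconstructed from newC is D
  have hbig : bigOf k (newCOf n k Q) = D := by
    ext x
    rw [bigOf, Finset.mem_insert, Finset.mem_filter]
    constructor
    · rintro (rfl | ⟨hmem, hxk⟩)
      · exact h1D
      · rcases mem_newCOf_elim hmem with h | ⟨-, hlt, -⟩
        · exact h
        · omega
    · intro hxD
      by_cases hx1 : x = 1
      · exact Or.inl hx1
      · exact Or.inr ⟨Finset.mem_union_left _ hxD, hsD x hxD hx1⟩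
  -- newC is not kept
  have hnew_notkept : newCOf n k Q ∉ keptOf n k Q := by
    intro h
    obtain ⟨hne, hmem⟩ := Finset.mem_erase.1 (Finset.mem_filter.1 h).1
    exact hne (block1_eq_of_mem hn hmem
      (Finset.mem_union_left _ h1D)).symm
  -- kept together with small singletons gives parts minus D
  have hunion : keptOf n k Q ∪ smallsOf k (newCOf n k Q) = Q.parts.erase D := by
    ext B
    rw [Finset.mem_union]
    constructor
    · rintro (h | h)
      · exact (Finset.mem_filter.1 h).1
      · obtain ⟨a, haC, ha1, hak, rfl⟩ := mem_smallsOf.1 h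
        have haQ : ({a} : Finset ℕ) ∈ Q.parts := by
          rcases mem_newCOf_elim haC with h' | ⟨-, -, h3⟩
          · exact absurd (hsD a h' (by omega)) (by omega)
          · exact h3
        refine Finset.mem_erase.2 ⟨?_, haQ⟩
        intro hcontr
        rw [← hcontr] at hD2
        simp at hD2
    · intro h
      obtain ⟨hne, hmem⟩ := Finset.mem_erase.1 h
      by_cases hpred : B.card = 1 ∧ blockMax B < k
      · right
        obtain ⟨a, rfl⟩ := Finset.card_eq_one.1 hpred.1
        have hak : a < k := by
          have := hpred.2
          rwa [blockMax_singleton] at this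
        have haIcc := part_subset hmem (Finset.mem_singleton_self a)
        have ha1 : 1 ≤ a := (Finset.mem_Icc.1 haIcc).1
        have hane : a ≠ 1 := by
          rintro rfl
          exact h1 hmem
        refine mem_smallsOf.2 ⟨a, ?_, by omega, hak, rfl⟩
        exact Finset.mem_union_right _
          (Finset.mem_filter.2 ⟨Finset.mem_Icc.2 ⟨ha1, by omega⟩, hmem⟩)
      · exact Or.inl (Finset.mem_filter.2 ⟨h, hpred⟩)
  apply Finpartition.ext
  rw [phi_parts, phiParts, block1_psi hn Q, hbig, psi_parts,
    Finset.erase_insert hnew_notkept, hunion, Finset.insert_erase hDmem]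

lemma cardGe (hn : 1 ≤ n) (k : ℕ) (hk : 1 ≤ k) :
    Nat.card {P : Finpartition (Finset.Icc 1 n) // k ≤ X n P} =
      Nat.card {P : Finpartition (Finset.Icc 1 n) // k ≤ Y n P} := by
  rcases eq_or_lt_of_le hk with h | h
  · -- k = 1 : both are the whole type
    subst h
    rw [Nat.card_congr (Equiv.subtypeUnivEquiv (fun P => one_le_X hn P)),
      Nat.card_congr (Equiv.subtypeUnivEquiv (fun P => one_le_Y hn P))]
  · -- k ≥ 2 : the explicit bijection
    have hk2 : 2 ≤ k := h
    exact Nat.card_congr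
      ⟨fun P => ⟨phi k hn P.1, Y_phi hn hk2 P.2⟩,
       fun Q => ⟨psi k hn Q.1, X_psi hn hk2 Q.2⟩,
       fun P => Subtype.ext (psi_phi hn hk2 P.2),
       fun Q => Subtype.ext (phi_psi hn hk2 Q.2)⟩

lemma card_split (f : Finpartition (Finset.Icc 1 n) → ℕ) (m : ℕ) :
    Nat.card {P : Finpartition (Finset.Icc 1 n) // f P = m} +
      Nat.card {P : Finpartition (Finset.Icc 1 n) // m + 1 ≤ f P} =
      Nat.card {P : Finpartition (Finset.Icc 1 n) // m ≤ f P} := by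
  classical
  rw [← Nat.card_sum]
  apply Nat.card_congr
  refine Equiv.trans (Equiv.sumCongr
    (Equiv.subtypeEquivRight (q := fun P => m ≤ f P ∧ f P = m) (fun P => by omega))
    (Equiv.subtypeEquivRight (q := fun P => m ≤ f P ∧ ¬ f P = m) (fun P => by omega)))
    ?_
  refine Equiv.trans (Equiv.sumCongr
    ((Equiv.subtypeSubtypeEquivSubtypeInter (fun P => m ≤ f P) (fun P => f P = m)).symm)
    ((Equiv.subtypeSubtypeEquivSubtypeInter (fun P => m ≤ f P) (fun P => ¬ f P = m)).symm))
    ?_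
  exact Equiv.sumCompl _

/-- for n ≥ 3 and 1 ≤ k ≤ n, the number of partitions of [n] with
X = k equals the number with Y = k. -/
theorem statement14 (n : ℕ) (hn : 3 ≤ n) (k : ℕ) (hk1 : 1 ≤ k) (hk2 : k ≤ n) :
    Nat.card {P : Finpartition (Finset.Icc 1 n) // X n P = k} =
      Nat.card {P : Finpartition (Finset.Icc 1 n) // Y n P = k} := by
  have hn1 : 1 ≤ n := by omega
  have h1 := card_split (X n) k
  have h2 := card_split (Y n) k
  have h3 := cardGe hn1 k hk1
  have h4 := cardGe hn1 (k + 1) (by omega)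
  omega
end
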